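/- arXiv:2505.22339 — 6 statements merged into one kernel-verified Lean document; each statement's English description precedes it below -/
import Mathlib

section
/- For n ≥ 2 the cones Γ̃_k satisfy: Γ̃_1 = Γ_1; Γ̃_{k+1} ⊆ Γ̃_k for every 1 ≤ k ≤ n−1; and Γ_2 ⊆ Γ̃_n. -/
noncomputable section

/-- The `m`-th elementary symmetric polynomial of `x ∈ ℝⁿ` (`σ_0 = 1`). -/
def esymm (n m : ℕ) (x : Fin n → ℝ) : ℝ :=
  ∑ s ∈ Finset.univ.powersetCard m, ∏ i ∈ s, x i

/-- The Garding cone `Γ_k = {λ ∈ ℝⁿ : σ_m(λ) > 0 for m = 1,…,k}`. -/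
def Gamma (n k : ℕ) : Set (Fin n → ℝ) :=
  {x | ∀ m : ℕ, 1 ≤ m → m ≤ k → 0 < esymm n m x}

/-- `λ(κ)_i = ∑_{j ≠ i} κ_j`. -/
def lamEta (n : ℕ) (κ : Fin n → ℝ) : Fin n → ℝ :=
  fun i => ∑ j ∈ Finset.univ.erase i, κ j

/-- The cone `Γ̃_k = {κ ∈ ℝⁿ : λ(κ) ∈ Γ_k}`. -/
def GammaT (n k : ℕ) : Set (Fin n → ℝ) :=
  {κ | lamEta n κ ∈ Gamma n k}

/-- The Hessian-quotient type operator `F(κ) = σ_k(λ(κ))/σ_l(λ(κ))`. -/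
def Fquot (n k l : ℕ) (κ : Fin n → ℝ) : ℝ :=
  esymm n k (lamEta n κ) / esymm n l (lamEta n κ)

lemma my_esymm1_eq {ι : Type*} (s : Finset ι) (x : ι → ℝ) :
    ∑ t ∈ s.powersetCard 1, ∏ i ∈ t, x i = ∑ i ∈ s, x i := by
  rw [Finset.powersetCard_one, Finset.sum_map]
  simp

lemma my_two_esymm2 {ι : Type*} [DecidableEq ι] (s : Finset ι) (x : ι → ℝ) :
    2 * ∑ t ∈ s.powersetCard 2, ∏ i ∈ t, x i
      = (∑ i ∈ s, x i) ^ 2 - ∑ i ∈ s, (x i) ^ 2 := by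
  induction s using Finset.induction_on with
  | empty =>
    have : (∅ : Finset ι).powersetCard 2 = ∅ := Finset.powersetCard_eq_empty.2 (by simp)
    rw [this]; simp
  | @insert a s ha ih =>
    rw [show (2:ℕ) = Nat.succ 1 from rfl, Finset.powersetCard_succ_insert ha]
    rw [Finset.sum_union, Finset.sum_image]
    · rw [Finset.sum_insert ha, Finset.sum_insert ha]
      have h1 : ∀ t ∈ s.powersetCard 1, ∏ i ∈ insert a t, x i = x a * ∏ i ∈ t, x i := by
        intro t ht
        have : a ∉ t := fun h => ha ((Finset.mem_powersetCard.1 ht).1 h)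
        rw [Finset.prod_insert this]
      rw [Finset.sum_congr rfl h1, ← Finset.mul_sum, my_esymm1_eq]
      ring_nf
      nlinarith [ih]
    · intro t ht u hu h
      have hat : a ∉ t := fun h => ha ((Finset.mem_powersetCard.1 ht).1 h)
      have hau : a ∉ u := fun h => ha ((Finset.mem_powersetCard.1 hu).1 h)
      rw [← Finset.erase_insert hat, ← Finset.erase_insert hau, h]
    · rw [Finset.disjoint_left]
      intro t ht ht'
      obtain ⟨u, hu, rfl⟩ := Finset.mem_image.1 ht'
      exact ha ((Finset.mem_powersetCard.1 ht).1 (Finset.mem_insert_self a u))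

lemma my_esymm_one (n : ℕ) (x : Fin n → ℝ) : esymm n 1 x = ∑ i, x i :=
  my_esymm1_eq _ _

lemma my_lamEta_eq (n : ℕ) (κ : Fin n → ℝ) (i : Fin n) :
    lamEta n κ i = (∑ j, κ j) - κ i := by
  simpa [lamEta] using Finset.sum_erase_eq_sub (f := κ) (Finset.mem_univ i)

/-- If `κ ∈ Γ_2` then every `λ(κ)_i = σ_1(κ) - κ_i > 0`. -/
lemma my_lamEta_pos (n : ℕ) (hn : 2 ≤ n) (κ : Fin n → ℝ) (hκ : κ ∈ Gamma n 2) (i : Fin n) :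
    0 < lamEta n κ i := by
  have hS : 0 < ∑ j, κ j := by
    have := hκ 1 le_rfl (by norm_num)
    rwa [my_esymm_one] at this
  have hσ2 : 0 < esymm n 2 κ := hκ 2 (by norm_num) le_rfl
  rw [my_lamEta_eq]
  by_contra hle
  push_neg at hle
  set S := ∑ j, κ j with hSdef
  set s := S - κ i with hsdef
  have hs : s ≤ 0 := hle
  -- sum over erase
  have hsum_erase : ∑ j ∈ Finset.univ.erase i, κ j = s := by
    exact Finset.sum_erase_eq_sub (f := κ) (Finset.mem_univ i)
  have hsq_erase : ∑ j ∈ Finset.univ.erase i, (κ j) ^ 2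
      = (∑ j, (κ j) ^ 2) - (κ i) ^ 2 := by
    simpa using Finset.sum_erase_eq_sub (f := fun j => (κ j) ^ 2) (Finset.mem_univ i)
  set T := ∑ j ∈ Finset.univ.erase i, (κ j) ^ 2 with hTdef
  have hcard : ((Finset.univ.erase i).card : ℝ) = (n : ℝ) - 1 := by
    rw [Finset.card_erase_of_mem (Finset.mem_univ i), Finset.card_univ, Fintype.card_fin]
    have : (1:ℕ) ≤ n := by omega
    push_cast [Nat.cast_sub this]
    ring
  have hc : (1:ℝ) ≤ (n : ℝ) - 1 := by
    have : (2:ℝ) ≤ (n : ℝ) := by exact_mod_cast hn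
    linarith
  have hCS : s ^ 2 ≤ ((n : ℝ) - 1) * T := by
    have := sq_sum_le_card_mul_sum_sq (s := Finset.univ.erase i) (f := κ)
    rwa [hsum_erase, hcard] at this
  have hid : 2 * esymm n 2 κ = S ^ 2 - ((κ i) ^ 2 + T) := by
    have h2 := my_two_esymm2 (Finset.univ : Finset (Fin n)) κ
    rw [esymm, h2]
    have h3 : (∑ j, (κ j) ^ 2) = T + (κ i) ^ 2 := by rw [hsq_erase]; ring
    rw [h3, ← hSdef]
    ring
  have hκi : κ i = S - s := by rw [hsdef]; ring
  have e1 : 2 * esymm n 2 κ = 2*S*s - s^2 - T := by rw [hid, hκi]; ring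
  have hcpos : (0:ℝ) < (n:ℝ) - 1 := by linarith
  have e2 : (2*S*s - s^2 - T) * ((n:ℝ)-1) ≤ (2*S*s - s^2)*((n:ℝ)-1) - s^2 := by
    nlinarith [hCS]
  have hpos : 0 < (2*S*s - s^2 - T) * ((n:ℝ)-1) := by
    rw [← e1]; exact mul_pos (by linarith) hcpos
  nlinarith [e2, hpos, mul_nonneg (mul_nonneg hS.le (neg_nonneg.2 hs)) hcpos.le,
    mul_nonneg (sq_nonneg s) hcpos.le, sq_nonneg s]

/-- For `n ≥ 2` one has `Γ̃_1 = Γ_1`, `Γ̃_{k+1} ⊆ Γ̃_k` for `1 ≤ k ≤ n−1`,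
and `Γ_2 ⊆ Γ̃_n`. -/
theorem stmt_1 (n : ℕ) (hn : 2 ≤ n) :
    GammaT n 1 = Gamma n 1 ∧
    (∀ k : ℕ, 1 ≤ k → k ≤ n - 1 → GammaT n (k + 1) ⊆ GammaT n k) ∧
    Gamma n 2 ⊆ GammaT n n := by
  refine ⟨?_, ?_, ?_⟩
  · -- Γ̃_1 = Γ_1
    ext κ
    have hsum : ∑ i, lamEta n κ i = ((n : ℝ) - 1) * ∑ j, κ j := by
      have : ∀ i : Fin n, lamEta n κ i = (∑ j, κ j) - κ i := my_lamEta_eq n κ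
      rw [Finset.sum_congr rfl (fun i _ => this i), Finset.sum_sub_distrib,
        Finset.sum_const, Finset.card_univ, Fintype.card_fin]
      push_cast
      ring
    have hnpos : (0:ℝ) < (n : ℝ) - 1 := by
      have : (2:ℝ) ≤ (n : ℝ) := by exact_mod_cast hn
      linarith
    constructor
    · intro h m hm1 hm2
      have hm : m = 1 := le_antisymm hm2 hm1
      subst hm
      have := h 1 le_rfl le_rfl
      rw [my_esymm_one, hsum] at this
      rw [my_esymm_one]
      nlinarith [this, hnpos]
    · intro h m hm1 hm2
      have hm : m = 1 := le_antisymm hm2 hm1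
      subst hm
      have := h 1 le_rfl le_rfl
      rw [my_esymm_one] at this
      rw [my_esymm_one, hsum]
      exact mul_pos hnpos this
  · -- nesting
    intro k _ _ κ hκ m hm1 hm2
    exact hκ m hm1 (hm2.trans (Nat.le_succ k))
  · -- Γ_2 ⊆ Γ̃_n
    intro κ hκ m hm1 hm2
    apply Finset.sum_pos
    · intro t ht
      apply Finset.prod_pos
      intro i _
      exact my_lamEta_pos n hn κ hκ i
    · apply Finset.powersetCard_nonempty.2
      rw [Finset.card_univ, Fintype.card_fin]
      exact hm2
end
end

section
/- (Generalized Newton–MacLaurin inequality) Let λ ∈ Γ_k ⊂ ℝⁿ and let integers satisfy n ≥ k > l ≥ 0, n ≥ r > s ≥ 0, k ≥ r, l ≥ s. Then [ (σ_k(λ)/C(n,k)) / (σ_l(λ)/C(n,l)) ]^{1/(k−l)} ≤ [ (σ_r(λ)/C(n,r)) / (σ_s(λ)/C(n,s)) ]^{1/(r−s)}, where C(n,m) is the binomial coefficient n choose m. -/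
noncomputable section

open Finset Polynomial


lemma esymm_multiset (n m : ℕ) (x : Fin n → ℝ) :
    (Multiset.map x Finset.univ.val).esymm m = esymm n m x := by
  rw [show Multiset.map x Finset.univ.val = Finset.univ.val.map x from rfl,
    Finset.esymm_map_val]
  rfl

lemma esymm_zero' (n : ℕ) (x : Fin n → ℝ) : esymm n 0 x = 1 := by
  simp [esymm]

lemma esymm_top (n : ℕ) (x : Fin n → ℝ) : esymm n n x = ∏ i, x i := by
  unfold esymm
  have h : Finset.univ.powersetCard n = ({Finset.univ} : Finset (Finset (Fin n))) := by
    simpa using Finset.powersetCard_self (Finset.univ : Finset (Fin n))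
  rw [h, Finset.sum_singleton]

lemma esymm_compl (n j : ℕ) (hj : j ≤ n) (x : Fin n → ℝ) :
    esymm n (n - j) x = ∑ B ∈ Finset.univ.powersetCard j, ∏ i ∈ Bᶜ, x i := by
  unfold esymm
  refine Finset.sum_nbij' (fun A => Aᶜ) (fun B => Bᶜ) ?_ ?_ ?_ ?_ ?_
  · intro A hA
    rw [Finset.mem_powersetCard_univ] at hA ⊢
    rw [Finset.card_compl, hA, Fintype.card_fin]
    omega
  · intro B hB
    rw [Finset.mem_powersetCard_univ] at hB ⊢
    rw [Finset.card_compl, hB, Fintype.card_fin]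
  · intro A _; exact compl_compl A
  · intro B _; exact compl_compl B
  · intro A _; rw [compl_compl]

lemma sum_pC_one (n : ℕ) (g : Finset (Fin n) → ℝ) :
    ∑ B ∈ Finset.univ.powersetCard 1, g B = ∑ i, g {i} := by
  refine (Finset.sum_bij (fun (i : Fin n) _ => ({i} : Finset (Fin n))) ?_ ?_ ?_ ?_).symm
  · intro i _; rw [Finset.mem_powersetCard_univ]; simp
  · intro a _ b _ h; simpa using h
  · intro B hB
    rw [Finset.mem_powersetCard_univ, Finset.card_eq_one] at hB
    obtain ⟨a, rfl⟩ := hB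
    exact ⟨a, Finset.mem_univ a, rfl⟩
  · intro i _; rfl

lemma sum_pC_two (n : ℕ) (g : Finset (Fin n) → ℝ) :
    ∑ B ∈ Finset.univ.powersetCard 2, g B = ∑ i, ∑ j ∈ Finset.Ioi i, g {i, j} := by
  rw [← Finset.sum_sigma Finset.univ (fun i => Finset.Ioi i) (fun p => g {p.1, p.2})]
  refine (Finset.sum_bij (fun (p : Σ _ : Fin n, Fin n) _ => ({p.1, p.2} : Finset (Fin n))) ?_ ?_ ?_ ?_).symm
  · intro p hp
    rw [Finset.mem_sigma, Finset.mem_Ioi] at hp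
    rw [Finset.mem_powersetCard_univ, Finset.card_insert_of_notMem (by simp [hp.2.ne]),
      Finset.card_singleton]
  · intro p hp' q hq' h
    rw [Finset.mem_sigma, Finset.mem_Ioi] at hp' hq'
    obtain ⟨-, hp2⟩ := hp'; obtain ⟨-, hq2⟩ := hq'
    have h1 : p.1 ∈ ({q.1, q.2} : Finset (Fin n)) := by rw [← h]; simp
    have h2 : p.2 ∈ ({q.1, q.2} : Finset (Fin n)) := by rw [← h]; simp
    have h3 : q.1 ∈ ({p.1, p.2} : Finset (Fin n)) := by rw [h]; simp
    simp only [Finset.mem_insert, Finset.mem_singleton] at h1 h2 h3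
    have e1 : p.1 = q.1 := by
      rcases h1 with h1 | h1
      · exact h1
      · rcases h3 with h3 | h3
        · exact h3.symm
        · exfalso; rw [h3, ← h1] at hq2; exact lt_asymm hp2 hq2
    have e2 : p.2 = q.2 := by
      rcases h2 with h2 | h2
      · exfalso; rw [← e1] at h2; exact hp2.ne' h2
      · exact h2
    exact Sigma.ext e1 (heq_of_eq e2)
  · intro B hB
    rw [Finset.mem_powersetCard_univ, Finset.card_eq_two] at hB
    obtain ⟨a, b, hab, rfl⟩ := hB
    rcases lt_or_gt_of_ne hab with h | h
    · exact ⟨⟨a, b⟩, by simp [Finset.mem_sigma, Finset.mem_Ioi, h], rfl⟩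
    · exact ⟨⟨b, a⟩, by simp [Finset.mem_sigma, Finset.mem_Ioi, h], Finset.pair_comm b a⟩
  · intro p _; rfl

lemma sq_sum_split (n : ℕ) (t : Fin n → ℝ) :
    (∑ i, t i) ^ 2 = ∑ i, t i ^ 2 + 2 * ∑ i, ∑ j ∈ Finset.Ioi i, t i * t j := by
  have hsw : ∑ i, ∑ j ∈ Finset.Iio i, t i * t j = ∑ i, ∑ j ∈ Finset.Ioi i, t i * t j := by
    rw [Finset.sum_comm' (s' := fun j => Finset.Ioi j) (t' := Finset.univ)
      (by intro x y; simp [Finset.mem_Iio, Finset.mem_Ioi, and_comm])]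
    exact Finset.sum_congr rfl fun a _ => Finset.sum_congr rfl fun b _ => mul_comm _ _
  have huniv : ∀ i : Fin n, ∑ j, t i * t j
      = t i * t i + (∑ j ∈ Finset.Ioi i, t i * t j + ∑ j ∈ Finset.Iio i, t i * t j) := by
    intro i
    rw [← Finset.add_sum_erase Finset.univ _ (Finset.mem_univ i)]
    congr 1
    have hu : Finset.univ.erase i = Finset.Ioi i ∪ Finset.Iio i := by
      ext a
      simp only [Finset.mem_erase, Finset.mem_univ, and_true, Finset.mem_union,
        Finset.mem_Ioi, Finset.mem_Iio]
      constructor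
      · intro h; exact lt_or_gt_of_ne (Ne.symm h)
      · rintro (h | h) rfl <;> exact lt_irrefl _ h
    rw [hu, Finset.sum_union (Finset.disjoint_Ioi_Iio i)]
  have hsq : ∑ i, t i * t i = ∑ i, t i ^ 2 :=
    Finset.sum_congr rfl fun i _ => (sq (t i)).symm
  rw [sq, Finset.sum_mul_sum]
  rw [Finset.sum_congr rfl fun i _ => huniv i, Finset.sum_add_distrib, Finset.sum_add_distrib,
    hsw, hsq]
  ring

lemma t_mul_t (n : ℕ) (x : Fin n → ℝ) {i j : Fin n} (hij : i < j) :
    (∏ a ∈ ({i, j} : Finset (Fin n))ᶜ, x a) * ∏ a, x a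
      = (∏ a ∈ Finset.univ.erase i, x a) * ∏ a ∈ Finset.univ.erase j, x a := by
  have hne : i ≠ j := hij.ne
  have hE : ({i, j} : Finset (Fin n))ᶜ = (Finset.univ.erase j).erase i := by
    rw [Finset.compl_insert, Finset.compl_singleton]
  have h1 : ∏ a ∈ Finset.univ.erase i, x a
      = x j * ∏ a ∈ (Finset.univ.erase i).erase j, x a := by
    rw [Finset.mul_prod_erase _ _ (by simp [Ne.symm hne])]
  have h2 : ∏ a ∈ Finset.univ.erase j, x a
      = x i * ∏ a ∈ (Finset.univ.erase j).erase i, x a := by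
    rw [Finset.mul_prod_erase _ _ (by simp [hne])]
  have h3 : ∏ a, x a = x i * ∏ a ∈ Finset.univ.erase i, x a := by
    rw [Finset.mul_prod_erase _ _ (Finset.mem_univ i)]
  have hcomm : (Finset.univ.erase i).erase j = (Finset.univ.erase j).erase i := by
    ext a; simp only [Finset.mem_erase, Finset.mem_univ, and_true]; tauto
  rw [hE, h3, h1, h2, hcomm]
  ring

lemma newton_base (n : ℕ) (hn : 2 ≤ n) (x : Fin n → ℝ) :
    2 * (esymm n (n-2) x * esymm n n x) * (n:ℝ)^2
      ≤ esymm n (n-1) x ^ 2 * ((n:ℝ) * ((n:ℝ) - 1)) := by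
  set t : Fin n → ℝ := fun i => ∏ a ∈ Finset.univ.erase i, x a with ht
  have h1 : esymm n (n-1) x = ∑ i, t i := by
    rw [esymm_compl n 1 (by omega), sum_pC_one]
    exact Finset.sum_congr rfl fun i _ => by rw [Finset.compl_singleton]
  have h2 : esymm n (n-2) x * esymm n n x = ∑ i, ∑ j ∈ Finset.Ioi i, t i * t j := by
    rw [esymm_compl n 2 (by omega), esymm_top, Finset.sum_mul,
      sum_pC_two n (fun B => (∏ a ∈ Bᶜ, x a) * ∏ a, x a)]
    exact Finset.sum_congr rfl fun i _ => Finset.sum_congr rfl fun j hj =>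
      t_mul_t n x (Finset.mem_Ioi.mp hj)
  have hcs : (∑ i, t i) ^ 2 ≤ (n:ℝ) * ∑ i, t i ^ 2 := by
    simpa using sq_sum_le_card_mul_sum_sq (s := Finset.univ) (f := t)
  have hsplit := sq_sum_split n t
  have hn' : (2:ℝ) ≤ (n:ℝ) := by exact_mod_cast hn
  rw [h1, h2]
  nlinarith [mul_le_mul_of_nonneg_left hcs (by positivity : (0:ℝ) ≤ (n:ℝ)),
    sq_nonneg (∑ i, t i)]

lemma two_mul_choose_two : ∀ t : ℕ, 2 * t.choose 2 = t * (t - 1)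
  | 0 => rfl
  | (t+1) => by
    rw [Nat.choose_succ_succ, Nat.mul_add, two_mul_choose_two t, Nat.choose_one_right]
    rcases t with _ | u
    · rfl
    · simp only [Nat.succ_sub_one]
      ring

lemma choose_shift (n j : ℕ) :
    (n + 1) * n.choose j = (n + 1 - j) * (n + 1).choose j := by
  rw [Nat.add_one_mul_choose_eq, Nat.choose_succ_right_eq, Nat.mul_comm]

lemma newton_ms : ∀ (m n : ℕ), m + 2 ≤ n → ∀ s : Multiset ℝ, Multiset.card s = n →
    s.esymm m * s.esymm (m + 2) * ((n.choose (m+1) : ℝ))^2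
      ≤ s.esymm (m+1) ^ 2 * ((n.choose m : ℝ) * (n.choose (m+2) : ℝ)) := by
  intro m n hn
  induction n, hn using Nat.le_induction with
  | base =>
    intro s hcard
    set x : Fin s.toList.length → ℝ := s.toList.get with hx
    have hlen : s.toList.length = m + 2 := by rw [Multiset.length_toList, hcard]
    have hmap : Multiset.map x Finset.univ.val = s := by
      rw [show Multiset.map x Finset.univ.val = Multiset.map x Finset.univ.val from rfl]
      rw [Fin.univ_val_map, List.ofFn_get, Multiset.coe_toList]
    have hes : ∀ j, s.esymm j = esymm s.toList.length j x := by
      intro j; rw [← esymm_multiset, hmap]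
    have hbase := newton_base s.toList.length (by omega) x
    rw [← hes, ← hes, ← hes] at hbase
    rw [hlen] at hbase
    rw [show m + 2 - 2 = m from by omega, show m + 2 - 1 = m + 1 from by omega] at hbase
    push_cast at hbase
    have h1 : (m+2).choose (m+1) = m + 2 := Nat.choose_succ_self_right (m+1)
    have h2 : (m+2).choose (m+2) = 1 := Nat.choose_self (m+2)
    have hsymm : (m+2).choose m = (m+2).choose 2 := Nat.choose_symm (n := m+2) (k := 2) (by omega)
    have hnat : 2 * ((m+2).choose m) = (m+2) * (m+1) := by
      rw [hsymm, two_mul_choose_two]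
      congr 1
    have h0 : 2 * (((m+2).choose m : ℕ) : ℝ) = ((m:ℝ)+2) * ((m:ℝ)+1) := by
      exact_mod_cast congrArg (Nat.cast (R := ℝ)) hnat
    have h0' : s.esymm (m+1) ^ 2 * (((m:ℝ)+2) * ((m:ℝ)+1))
        = s.esymm (m+1) ^ 2 * (2 * (((m+2).choose m : ℕ) : ℝ)) := by rw [h0]
    rw [h1, h2]
    push_cast
    nlinarith [hbase, h0']
  | succ n hn IH =>
    intro s hcard
    set p : Polynomial ℝ := (s.map fun a => Polynomial.X + Polynomial.C a).prod with hp
    have hmonform : ∀ f ∈ s.map fun a => Polynomial.X + Polynomial.C a, f.Monic := by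
      intro f hf
      obtain ⟨a, -, rfl⟩ := Multiset.mem_map.mp hf
      exact Polynomial.monic_X_add_C a
    have hmonic : p.Monic :=
      Polynomial.monic_multiset_prod_of_monic s _ (fun a _ => Polynomial.monic_X_add_C a)
    have hdegp : p.natDegree = n + 1 := by
      rw [hp, Polynomial.natDegree_multiset_prod_of_monic _ hmonform, Multiset.map_map]
      have h : Multiset.map (Polynomial.natDegree ∘ fun a => Polynomial.X + Polynomial.C a) s
          = Multiset.map (fun _ => 1) s :=
        Multiset.map_congr rfl fun a _ => Polynomial.natDegree_X_add_C a
      rw [h, Multiset.map_const', Multiset.sum_replicate, smul_eq_mul, mul_one, hcard]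
    have hcoeffp : ∀ j, j ≤ n + 1 → p.coeff (n + 1 - j) = s.esymm j := by
      intro j hj
      rw [hp, Multiset.prod_X_add_C_coeff s (by omega : n + 1 - j ≤ Multiset.card s)]
      rw [hcard]
      congr 1
      omega
    have hprootscard : Multiset.card p.roots = n + 1 := by
      have hform : p = ((s.map (fun a => -a)).map fun a => Polynomial.X - Polynomial.C a).prod := by
        rw [hp, Multiset.map_map]
        apply congr_arg
        apply Multiset.map_congr rfl
        intro a _
        simp [sub_neg_eq_add]
      rw [hform, Polynomial.roots_multiset_prod_X_sub_C, Multiset.card_map, hcard]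
    set q := Polynomial.derivative p with hq
    have hqtop : q.coeff n = ((n:ℝ)+1) := by
      rw [hq, Polynomial.coeff_derivative,
        show p.coeff (n+1) = 1 from by rw [← hdegp]; exact hmonic.coeff_natDegree]
      ring
    have hdegq_le : q.natDegree ≤ n := by
      have h := Polynomial.natDegree_derivative_le p
      rw [← hq] at h
      omega
    have hdegq : q.natDegree = n :=
      le_antisymm hdegq_le (Polynomial.le_natDegree_of_ne_zero (by rw [hqtop]; positivity))
    have hq0 : q ≠ 0 := fun h => by
      rw [h] at hqtop; simp only [Polynomial.coeff_zero] at hqtop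
      have : (0:ℝ) < (n:ℝ)+1 := by positivity
      linarith [hqtop]
    have hqroots : Multiset.card q.roots = n := by
      have h2 := Polynomial.card_roots_le_derivative p
      have h3 : Multiset.card q.roots ≤ n := le_trans (Polynomial.card_roots' q) (le_of_eq hdegq)
      rw [hprootscard, ← hq] at h2
      omega
    have hfact := Polynomial.C_leadingCoeff_mul_prod_multiset_X_sub_C
      (p := q) (by rw [hqroots, hdegq])
    have hlead : q.leadingCoeff = ((n:ℝ)+1) := by
      rw [Polynomial.leadingCoeff, hdegq, hqtop]
    set t : Multiset ℝ := q.roots.map (fun a => -a) with htdef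
    have htcard : Multiset.card t = n := by rw [htdef, Multiset.card_map, hqroots]
    have hprodeq : (t.map fun a => Polynomial.X + Polynomial.C a).prod
        = (q.roots.map fun a => Polynomial.X - Polynomial.C a).prod := by
      rw [htdef, Multiset.map_map]
      apply congr_arg
      apply Multiset.map_congr rfl
      intro a _
      simp [sub_eq_add_neg]
    have hqfact : q = Polynomial.C ((n:ℝ)+1) * (t.map fun a => Polynomial.X + Polynomial.C a).prod := by
      rw [hprodeq, ← hlead]
      exact hfact.symm
    have hkey : ∀ j, j ≤ n → ((n:ℝ)+1) * t.esymm j = ((n + 1 - j : ℕ) : ℝ) * s.esymm j := by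
      intro j hj
      have h1 : q.coeff (n - j) = ((n:ℝ)+1) * t.esymm j := by
        rw [hqfact, Polynomial.coeff_C_mul,
          Multiset.prod_X_add_C_coeff t (by omega : n - j ≤ Multiset.card t)]
        rw [htcard]
        congr 2
        omega
      have h2 : q.coeff (n - j) = ((n + 1 - j : ℕ) : ℝ) * s.esymm j := by
        rw [hq, Polynomial.coeff_derivative, show n - j + 1 = n + 1 - j from by omega,
          hcoeffp j (by omega)]
        have : ((n - j : ℕ) : ℝ) + 1 = ((n + 1 - j : ℕ) : ℝ) := by
          push_cast [Nat.cast_sub (by omega : j ≤ n), Nat.cast_sub (by omega : j ≤ n + 1)]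
          ring
        rw [this, mul_comm]
      rw [← h1, h2]
    have hIH := IH t htcard
    have he0 := hkey m (by omega)
    have he1 := hkey (m+1) (by omega)
    have he2 := hkey (m+2) (by omega)
    have hf0 : ((n:ℝ)+1) * (n.choose m : ℝ)
        = ((n + 1 - m : ℕ) : ℝ) * ((n+1).choose m : ℝ) := by
      exact_mod_cast choose_shift n m
    have hf1 : ((n:ℝ)+1) * (n.choose (m+1) : ℝ)
        = ((n + 1 - (m+1) : ℕ) : ℝ) * ((n+1).choose (m+1) : ℝ) := by
      exact_mod_cast choose_shift n (m+1)
    have hf2 : ((n:ℝ)+1) * (n.choose (m+2) : ℝ)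
        = ((n + 1 - (m+2) : ℕ) : ℝ) * ((n+1).choose (m+2) : ℝ) := by
      exact_mod_cast choose_shift n (m+2)
    have ha0pos : (0:ℝ) < ((n + 1 - m : ℕ) : ℝ) := by
      exact_mod_cast Nat.sub_pos_of_lt (by omega)
    have ha1pos : (0:ℝ) < ((n + 1 - (m+1) : ℕ) : ℝ) := by
      exact_mod_cast Nat.sub_pos_of_lt (by omega)
    have ha2pos : (0:ℝ) < ((n + 1 - (m+2) : ℕ) : ℝ) := by
      exact_mod_cast Nat.sub_pos_of_lt (by omega)
    set N : ℝ := (n:ℝ) + 1 with hN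
    have hNpos : (0:ℝ) < N := by rw [hN]; positivity
    set E0 := s.esymm m
    set E1 := s.esymm (m+1)
    set E2 := s.esymm (m+2)
    set F0 := t.esymm m
    set F1 := t.esymm (m+1)
    set F2 := t.esymm (m+2)
    set a0 : ℝ := ((n + 1 - m : ℕ) : ℝ)
    set a1 : ℝ := ((n + 1 - (m+1) : ℕ) : ℝ)
    set a2 : ℝ := ((n + 1 - (m+2) : ℕ) : ℝ)
    set B0 : ℝ := (((n+1).choose m : ℕ) : ℝ)
    set B1 : ℝ := (((n+1).choose (m+1) : ℕ) : ℝ)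
    set B2 : ℝ := (((n+1).choose (m+2) : ℕ) : ℝ)
    set c0 : ℝ := ((n.choose m : ℕ) : ℝ)
    set c1 : ℝ := ((n.choose (m+1) : ℕ) : ℝ)
    set c2 : ℝ := ((n.choose (m+2) : ℕ) : ℝ)
    have hposf : (0:ℝ) < a0 * a1 ^ 2 * a2 := by positivity
    refine le_of_mul_le_mul_left ?_ hposf
    calc a0 * a1 ^ 2 * a2 * (E0 * E2 * B1 ^ 2)
        = (a0 * E0) * (a2 * E2) * (a1 * B1) ^ 2 := by ring
      _ = (N * F0) * (N * F2) * (N * c1) ^ 2 := by rw [← he0, ← he2, ← hf1]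
      _ = N ^ 4 * (F0 * F2 * c1 ^ 2) := by ring
      _ ≤ N ^ 4 * (F1 ^ 2 * (c0 * c2)) := by
          apply mul_le_mul_of_nonneg_left hIH (by positivity)
      _ = (N * F1) ^ 2 * ((N * c0) * (N * c2)) := by ring
      _ = (a1 * E1) ^ 2 * ((a0 * B0) * (a2 * B2)) := by rw [he1, hf0, hf2]
      _ = a0 * a1 ^ 2 * a2 * (E1 ^ 2 * (B0 * B2)) := by ring

lemma newton_fin (n m : ℕ) (hm : m + 2 ≤ n) (x : Fin n → ℝ) :
    esymm n m x * esymm n (m+2) x * ((n.choose (m+1) : ℝ))^2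
      ≤ esymm n (m+1) x ^ 2 * ((n.choose m : ℝ) * (n.choose (m+2) : ℝ)) := by
  have hcard : Multiset.card (Multiset.map x Finset.univ.val) = n := by
    simp
  have h := newton_ms m n hm _ hcard
  rwa [esymm_multiset, esymm_multiset, esymm_multiset] at h

/-- Generalized Newton–MacLaurin inequality: for `λ ∈ Γ_k` and integers
`n ≥ k > l ≥ 0`, `n ≥ r > s ≥ 0`, `k ≥ r`, `l ≥ s`:
`[(σ_k/C(n,k))/(σ_l/C(n,l))]^{1/(k−l)} ≤ [(σ_r/C(n,r))/(σ_s/C(n,s))]^{1/(r−s)}`. -/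
theorem stmt_5 (n k l r s : ℕ) (lam : Fin n → ℝ) (hlam : lam ∈ Gamma n k)
    (hlk : l < k) (hkn : k ≤ n) (hsr : s < r) (hrn : r ≤ n) (hrk : r ≤ k) (hsl : s ≤ l) :
    ((esymm n k lam / (n.choose k : ℝ)) / (esymm n l lam / (n.choose l : ℝ)))
        ^ (1 / ((k : ℝ) - l))
      ≤ ((esymm n r lam / (n.choose r : ℝ)) / (esymm n s lam / (n.choose s : ℝ)))
        ^ (1 / ((r : ℝ) - s)) := by

  set P : ℕ → ℝ := fun m => esymm n m lam / (n.choose m : ℝ) with hP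
  have hchoosepos : ∀ m, m ≤ n → (0:ℝ) < (n.choose m : ℝ) := fun m hm => by
    exact_mod_cast Nat.choose_pos hm
  have hppos : ∀ m, m ≤ k → 0 < P m := by
    intro m hm
    rcases Nat.eq_zero_or_pos m with rfl | hm1
    · have : P 0 = 1 := by rw [hP]; simp [esymm_zero']
      rw [this]; exact one_pos
    · exact div_pos (hlam m hm1 hm) (hchoosepos m (le_trans hm hkn))
  set f : ℕ → ℝ := fun m => Real.log (P m) with hf
  have hconc : ∀ m, m + 2 ≤ k → f m + f (m+2) ≤ 2 * f (m+1) := by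
    intro m hm
    have h := newton_fin n m (le_trans hm hkn) lam
    have hp0 := hppos m (by omega)
    have hp1 := hppos (m+1) (by omega)
    have hp2 := hppos (m+2) (by omega)
    have hc0 := hchoosepos m (by omega)
    have hc1 := hchoosepos (m+1) (by omega)
    have hc2 := hchoosepos (m+2) (by omega)
    have hPP : P m * P (m+2) ≤ P (m+1) ^ 2 := by
      rw [hP]
      dsimp only
      rw [div_mul_div_comm, div_pow, div_le_div_iff₀ (by positivity) (by positivity)]
      nlinarith [h]
    have hlog := Real.log_le_log (by positivity) hPP
    rw [Real.log_mul hp0.ne' hp2.ne', Real.log_pow] at hlog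
    have e0 : f m = Real.log (P m) := rfl
    have e1 : f (m+1) = Real.log (P (m+1)) := rfl
    have e2 : f (m+2) = Real.log (P (m+2)) := rfl
    rw [e0, e1, e2]
    push_cast at hlog
    linarith
  have hqanti : ∀ j mm, j ≤ mm → mm + 1 ≤ k → f (mm+1) - f mm ≤ f (j+1) - f j := by
    intro j mm hj
    induction mm, hj using Nat.le_induction with
    | base => intro _; exact le_refl _
    | succ mm hjm IH =>
      intro hmk
      have h1 : f (mm+2) - f (mm+1) ≤ f (mm+1) - f mm := by
        have := hconc mm (by omega)
        linarith
      exact le_trans h1 (IH (by omega))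
  have hwin : ∀ a b c, a ≤ b → b ≤ c → c ≤ k →
      ((b - a : ℕ) : ℝ) * ∑ i ∈ Finset.Ico b c, (f (i+1) - f i)
        ≤ ((c - b : ℕ) : ℝ) * ∑ i ∈ Finset.Ico a b, (f (i+1) - f i) := by
    intro a b c hab hbc hck
    have hstep : ∀ j ∈ Finset.Ico a b,
        ∑ i ∈ Finset.Ico b c, (f (i+1) - f i) ≤ ((c - b : ℕ) : ℝ) * (f (j+1) - f j) := by
      intro j hj
      rw [Finset.mem_Ico] at hj
      have hle : ∀ i ∈ Finset.Ico b c, f (i+1) - f i ≤ f (j+1) - f j := by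
        intro i hi
        rw [Finset.mem_Ico] at hi
        exact hqanti j i (by omega) (by omega)
      calc ∑ i ∈ Finset.Ico b c, (f (i+1) - f i)
          ≤ (Finset.Ico b c).card • (f (j+1) - f j) :=
            Finset.sum_le_card_nsmul _ _ _ hle
        _ = ((c - b : ℕ) : ℝ) * (f (j+1) - f j) := by
            rw [Nat.card_Ico, nsmul_eq_mul]
    calc ((b - a : ℕ) : ℝ) * ∑ i ∈ Finset.Ico b c, (f (i+1) - f i)
        = ∑ _j ∈ Finset.Ico a b, ∑ i ∈ Finset.Ico b c, (f (i+1) - f i) := by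
          rw [Finset.sum_const, Nat.card_Ico, nsmul_eq_mul]
      _ ≤ ∑ j ∈ Finset.Ico a b, ((c - b : ℕ) : ℝ) * (f (j+1) - f j) :=
          Finset.sum_le_sum hstep
      _ = ((c - b : ℕ) : ℝ) * ∑ j ∈ Finset.Ico a b, (f (j+1) - f j) := by
          rw [Finset.mul_sum]
  have htel : ∀ a b, a ≤ b → ∑ i ∈ Finset.Ico a b, (f (i+1) - f i) = f b - f a := by
    intro a b hab
    induction b, hab using Nat.le_induction with
    | base => simp
    | succ b hab IH => rw [Finset.sum_Ico_succ_top hab, IH]; ring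
  have h1 := hwin s l k hsl (by omega) (le_refl k)
  have h2 := hwin s r k hsr.le hrk (le_refl k)
  rw [htel l k hlk.le, htel s l hsl] at h1
  rw [htel s r hsr.le, htel r k hrk] at h2
  have hcast : ∀ a b : ℕ, a ≤ b → ((b - a : ℕ) : ℝ) = (b : ℝ) - (a : ℝ) := fun a b h => by
    push_cast [Nat.cast_sub h]; ring
  rw [hcast s l hsl, hcast l k hlk.le] at h1
  rw [hcast s r hsr.le, hcast r k hrk] at h2
  have hα : (0:ℝ) < (k:ℝ) - l := by
    have : (l:ℝ) < k := by exact_mod_cast hlk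
    linarith
  have hβ : (0:ℝ) < (r:ℝ) - s := by
    have : (s:ℝ) < r := by exact_mod_cast hsr
    linarith
  have hω : (0:ℝ) < (k:ℝ) - s := by
    have : (s:ℝ) ≤ l := by exact_mod_cast hsl
    linarith
  set A := f k - f l with hA
  set B := f r - f s with hB
  have e1 : ((k:ℝ) - s) * A ≤ ((k:ℝ) - l) * (f k - f s) := by
    rw [hA]; nlinarith [h1]
  have e2 : ((r:ℝ) - s) * (f k - f s) ≤ ((k:ℝ) - s) * B := by
    rw [hB]; nlinarith [h2]
  have e3 := mul_le_mul_of_nonneg_left e1 hβ.le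
  have e4 := mul_le_mul_of_nonneg_left e2 hα.le
  have e5 : ((k:ℝ) - s) * (((r:ℝ) - s) * A) ≤ ((k:ℝ) - s) * (((k:ℝ) - l) * B) := by
    nlinarith [e3, e4]
  have hfin : ((r:ℝ) - s) * A ≤ ((k:ℝ) - l) * B := le_of_mul_le_mul_left e5 hω
  have hx : 0 < P k / P l := div_pos (hppos k le_rfl) (hppos l (by omega))
  have hy : 0 < P r / P s := div_pos (hppos r hrk) (hppos s (by omega))
  show (P k / P l) ^ (1 / ((k : ℝ) - l)) ≤ (P r / P s) ^ (1 / ((r : ℝ) - s))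
  rw [Real.rpow_def_of_pos hx, Real.rpow_def_of_pos hy, Real.exp_le_exp,
    Real.log_div (hppos k le_rfl).ne' (hppos l (by omega)).ne',
    Real.log_div (hppos r hrk).ne' (hppos s (by omega)).ne']
  have hAk : Real.log (P k) - Real.log (P l) = A := rfl
  have hBk : Real.log (P r) - Real.log (P s) = B := rfl
  rw [hAk, hBk, mul_one_div, mul_one_div, div_le_div_iff₀ hα hβ]
  linarith [hfin]
end
end

section
/- If κ ∈ Γ̃_k and t ≥ 0, then κ + t e_i ∈ Γ̃_k for every standard basis vector e_i of ℝⁿ. Moreover, if κ = (κ_1,…,κ_n) ∈ Γ̃_k with κ_n > 0 and 0 < w < 1, then (κ_1/w, …, κ_{n−1}/w, κ_n/w³) ∈ Γ̃_k. -/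
open Polynomial

noncomputable section

namespace MyAux

lemma esymm_cons (a : ℝ) (s : Multiset ℝ) (k : ℕ) :
    (a ::ₘ s).esymm (k+1) = a * s.esymm k + s.esymm (k+1) := by
  simp only [Multiset.esymm, Multiset.powersetCard_cons, Multiset.map_add, Multiset.sum_add,
    Multiset.map_map, Function.comp_def, Multiset.prod_cons]
  rw [add_comm, Multiset.sum_map_mul_left]

lemma esymm_zero' (s : Multiset ℝ) : s.esymm 0 = 1 := by
  simp [Multiset.esymm, Multiset.powersetCard_zero_left]

lemma esymm_one' (s : Multiset ℝ) : s.esymm 1 = s.sum := by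
  simp [Multiset.esymm, Multiset.powersetCard_one, Multiset.map_map, Function.comp_def]

lemma esymm_eq_zero (s : Multiset ℝ) (k : ℕ) (h : Multiset.card s < k) : s.esymm k = 0 := by
  simp [Multiset.esymm, Multiset.powersetCard_eq_empty _ h]

lemma esymm_card (s : Multiset ℝ) : s.esymm (Multiset.card s) = s.prod := by
  induction s using Multiset.induction with
  | empty => simp [esymm_zero']
  | cons a s ih =>
      rw [Multiset.card_cons, esymm_cons, ih, esymm_eq_zero s _ (Nat.lt_succ_self _)]
      simp [Multiset.prod_cons]

lemma esymm_two (s : Multiset ℝ) :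
    2 * s.esymm 2 = s.sum ^ 2 - (s.map (fun a => a ^ 2)).sum := by
  induction s using Multiset.induction with
  | empty => simp [Multiset.esymm, Multiset.powersetCard_eq_empty _ (show Multiset.card (0 : Multiset ℝ) < 2 by simp)]
  | cons a s ih =>
      have e : (a ::ₘ s).esymm 2 = a * s.sum + s.esymm 2 := by
        have h := esymm_cons a s 1
        rw [esymm_one'] at h
        exact h
      simp only [Multiset.map_cons, Multiset.sum_cons, e]
      nlinarith [ih]

lemma esymm_inv (s : Multiset ℝ) (h0 : ∀ a ∈ s, a ≠ 0) :
    ∀ k, k ≤ Multiset.card s →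
      s.esymm (Multiset.card s - k) = s.prod * (s.map (·⁻¹)).esymm k := by
  induction s using Multiset.induction with
  | empty =>
      intro k hk
      have : k = 0 := by simpa using hk
      subst this
      simp [esymm_zero']
  | cons a s ih =>
      intro k hk
      have ha : a ≠ a⁻¹ * 0 := by simp [h0 a (Multiset.mem_cons_self _ _)]
      have ha' : a ≠ 0 := h0 a (Multiset.mem_cons_self _ _)
      have h0' : ∀ b ∈ s, b ≠ 0 := fun b hb => h0 b (Multiset.mem_cons_of_mem hb)
      cases k with
      | zero =>
          rw [Nat.sub_zero, esymm_card, esymm_zero', mul_one]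
      | succ j =>
          have hj1 : j ≤ Multiset.card s := by
            rw [Multiset.card_cons] at hk; omega
          by_cases hje : j = Multiset.card s
          · have hL : Multiset.card (a ::ₘ s) - (j+1) = 0 := by
              rw [Multiset.card_cons]; omega
            rw [hL, esymm_zero']
            have hcard : Multiset.card ((a ::ₘ s).map (·⁻¹)) = j + 1 := by
              rw [Multiset.card_map, Multiset.card_cons, hje]
            rw [← hcard, esymm_card, Multiset.prod_map_inv']
            have hpne : (a ::ₘ s).prod ≠ 0 :=
              Multiset.prod_ne_zero (fun h => h0 0 h rfl)
            exact (mul_inv_cancel₀ hpne).symm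
          · have hjlt : j + 1 ≤ Multiset.card s := by omega
            have hstep : Multiset.card (a ::ₘ s) - (j+1) = (Multiset.card s - (j+1)) + 1 := by
              rw [Multiset.card_cons]; omega
            have hstep2 : Multiset.card s - (j+1) + 1 = Multiset.card s - j := by omega
            rw [hstep, esymm_cons, hstep2, ih h0' (j+1) hjlt, ih h0' j hj1,
              Multiset.map_cons, esymm_cons, Multiset.prod_cons]
            field_simp
            ring

lemma newton_core (s : Multiset ℝ) (h2 : 2 ≤ Multiset.card s)
    (h1 : s.esymm (Multiset.card s - 1) = 0) (hm0 : s.esymm (Multiset.card s) ≠ 0) :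
    s.esymm (Multiset.card s - 2) * s.esymm (Multiset.card s) ≤ 0 := by
  have hprod : s.prod ≠ 0 := by rwa [esymm_card] at hm0
  have h0 : ∀ a ∈ s, a ≠ 0 := by
    intro a ha hae
    exact hprod (Multiset.prod_eq_zero (hae ▸ ha))
  set z := s.map (·⁻¹) with hz
  have e1 : s.esymm (Multiset.card s - 1) = s.prod * z.esymm 1 :=
    esymm_inv s h0 1 (by omega)
  have e2 : s.esymm (Multiset.card s - 2) = s.prod * z.esymm 2 :=
    esymm_inv s h0 2 h2
  have hsum : z.sum = 0 := by
    rw [e1, esymm_one'] at h1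
    rcases mul_eq_zero.mp h1 with h | h
    · exact absurd h hprod
    · exact h
  have hz2 : z.esymm 2 ≤ 0 := by
    have := esymm_two z
    rw [hsum] at this
    have hsq : 0 ≤ (z.map (fun a => a ^ 2)).sum :=
      Multiset.sum_nonneg (by
        intro x hx
        obtain ⟨y, _, rfl⟩ := Multiset.mem_map.mp hx
        positivity)
    nlinarith
  rw [e2, esymm_card]
  nlinarith [sq_nonneg s.prod]

lemma esymm_coeff (n : ℕ) (x : Fin n → ℝ) (m : ℕ) (hm : m ≤ n) :
    (∏ i, (X + C (x i))).coeff (n - m) = esymm n m x := by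
  have hcard : (Finset.univ : Finset (Fin n)).card = n := by simp
  have h : n - m ≤ (Finset.univ : Finset (Fin n)).card := by rw [hcard]; omega
  have e : (Finset.univ : Finset (Fin n)).card - (n - m) = m := by rw [hcard]; omega
  rw [Finset.prod_X_add_C_coeff _ _ h, e, esymm]

lemma newton (n : ℕ) (x : Fin n → ℝ) (m : ℕ) (hm2 : 2 ≤ m) (hmn : m ≤ n)
    (h1 : esymm n (m-1) x = 0) :
    esymm n (m-2) x * esymm n m x ≤ 0 := by
  by_cases hm0 : esymm n m x = 0
  · rw [hm0, mul_zero]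
  set P : ℝ[X] := ∏ i, (X + C (x i)) with hP
  have hPmonic : P.Monic := monic_prod_of_monic _ _ fun i _ => monic_X_add_C (x i)
  have hPdeg : P.natDegree = n := by
    rw [hP, natDegree_prod_of_monic _ _ fun i _ => monic_X_add_C (x i)]
    simp [natDegree_X_add_C]
  have hProots : P.roots = Finset.univ.val.map (fun i => -x i) := by
    have e : P = ((Finset.univ.val.map (fun i => -x i)).map (fun a => X - C a)).prod := by
      rw [hP, Finset.prod_eq_multiset_prod, Multiset.map_map]
      congr 1
      apply Multiset.map_congr rfl
      intro i _
      simp [sub_neg_eq_add]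
    rw [e, roots_multiset_prod_X_sub_C]
  have hPcard : Multiset.card P.roots = n := by rw [hProots]; simp
  have hcoeffiter : ∀ j, j ≤ n →
      (derivative^[j] P).coeff (n - j) = (n.descFactorial j : ℝ) := by
    intro j hj
    rw [Polynomial.coeff_iterate_derivative, Nat.sub_add_cancel hj]
    have : P.coeff n = 1 := by
      have := hPmonic.coeff_natDegree
      rwa [hPdeg] at this
    rw [this, nsmul_eq_mul, mul_one]
  have hdescpos : ∀ a b : ℕ, b ≤ a → (0:ℝ) < (a.descFactorial b : ℝ) := by
    intro a b hba
    have h : a.descFactorial b ≠ 0 := by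
      rw [Ne, Nat.descFactorial_eq_zero_iff_lt]; omega
    exact_mod_cast Nat.pos_of_ne_zero h
  have hdesc : ∀ j, j ≤ n → (n.descFactorial j : ℝ) ≠ 0 :=
    fun j hj => ne_of_gt (hdescpos n j hj)
  have hdeg : ∀ j, j ≤ n → (derivative^[j] P).natDegree = n - j := by
    intro j hj
    refine le_antisymm ((natDegree_iterate_derivative P j).trans (by rw [hPdeg])) ?_
    apply le_natDegree_of_ne_zero
    rw [hcoeffiter j hj]
    exact hdesc j hj
  have hcards : ∀ j, j ≤ n → Multiset.card (derivative^[j] P).roots = n - j := by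
    intro j hj
    induction j with
    | zero => simpa using hPcard
    | succ i ih =>
        have hi : i ≤ n := by omega
        have h1' : Multiset.card (derivative^[i] P).roots = n - i := ih hi
        have h2' : Multiset.card (derivative^[i] P).roots ≤
            Multiset.card (derivative (derivative^[i] P)).roots + 1 :=
          Polynomial.card_roots_le_derivative _
        have h3' : Multiset.card (derivative^[i+1] P).roots ≤ n - (i+1) := by
          rw [← hdeg (i+1) hj]
          exact Polynomial.card_roots' _
        rw [Function.iterate_succ_apply'] at h3' ⊢
        omega
  set R : ℝ[X] := derivative^[n - m] P with hR
  have hRdeg : R.natDegree = m := by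
    rw [hR, hdeg (n - m) (by omega)]
    omega
  have hRcard : Multiset.card R.roots = m := by
    rw [hR, hcards (n - m) (by omega)]
    omega
  have hR0 : R ≠ 0 := by
    intro h
    have := hcoeffiter (n - m) (by omega)
    rw [← hR, h] at this
    exact hdesc (n - m) (by omega) (by simpa using this.symm)
  have ha : R.leadingCoeff ≠ 0 := leadingCoeff_ne_zero.mpr hR0
  have key : ∀ j, j ≤ m → ((n - j).descFactorial (n - m) : ℝ) * esymm n j x =
      R.leadingCoeff * (-1) ^ j * (R.roots.esymm j) := by
    intro j hj
    have hA : R.coeff (m - j) = ((n - j).descFactorial (n - m) : ℝ) * esymm n j x := by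
      rw [hR, Polynomial.coeff_iterate_derivative]
      have e1 : m - j + (n - m) = n - j := by omega
      rw [e1, esymm_coeff n x j (by omega), nsmul_eq_mul]
    have hB : R.coeff (m - j) =
        R.leadingCoeff * (-1) ^ (R.natDegree - (m - j)) * R.roots.esymm (R.natDegree - (m - j)) :=
      Polynomial.coeff_eq_esymm_roots_of_card (hRcard.trans hRdeg.symm) (by rw [hRdeg]; omega)
    rw [hA, hRdeg] at hB
    have e2 : m - (m - j) = j := by omega
    rw [e2] at hB
    exact hB
  have E1 : R.roots.esymm (m - 1) = 0 := by
    have h := key (m-1) (by omega)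
    rw [h1, mul_zero] at h
    have hpow : ((-1 : ℝ)) ^ (m-1) ≠ 0 := by positivity
    rcases mul_eq_zero.mp h.symm with h' | h'
    · exact absurd h' (mul_ne_zero ha hpow)
    · exact h'
  have Em : R.roots.esymm m ≠ 0 := by
    intro h
    have hk := key m le_rfl
    rw [h, mul_zero] at hk
    exact mul_ne_zero (ne_of_gt (hdescpos (n-m) (n-m) le_rfl)) hm0 hk
  have hcore := MyAux.newton_core R.roots
  rw [hRcard] at hcore
  have hEE : R.roots.esymm (m - 2) * R.roots.esymm m ≤ 0 := hcore hm2 E1 Em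
  -- combine
  have k2 := key (m-2) (by omega)
  have km := key m le_rfl
  have hc1 : (0:ℝ) < ((n - (m-2)).descFactorial (n - m) : ℝ) := hdescpos _ _ (by omega)
  have hc2 : (0:ℝ) < ((n - m).descFactorial (n - m) : ℝ) := hdescpos _ _ le_rfl
  have hsq : ((-1:ℝ)) ^ (m-2) * (-1) ^ m = ((-1:ℝ) ^ (m-1))^2 := by
    rw [← pow_add, ← pow_mul]
    congr 1
    omega
  have hsq1 : ((-1:ℝ) ^ (m-1))^2 = 1 := by
    rw [← pow_mul, mul_comm (m-1) 2, pow_mul]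
    norm_num
  have hmul : (((n - (m-2)).descFactorial (n - m) : ℝ) * ((n - m).descFactorial (n - m) : ℝ)) *
      (esymm n (m-2) x * esymm n m x) =
      R.leadingCoeff^2 * (R.roots.esymm (m-2) * R.roots.esymm m) := by
    calc (((n - (m-2)).descFactorial (n - m) : ℝ) * ((n - m).descFactorial (n - m) : ℝ)) *
        (esymm n (m-2) x * esymm n m x)
        = (((n - (m-2)).descFactorial (n - m) : ℝ) * esymm n (m-2) x) *
          (((n - m).descFactorial (n - m) : ℝ) * esymm n m x) := by ring
      _ = (R.leadingCoeff * (-1) ^ (m-2) * (R.roots.esymm (m-2))) *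
          (R.leadingCoeff * (-1) ^ m * (R.roots.esymm m)) := by rw [k2, km]
      _ = R.leadingCoeff^2 * (((-1:ℝ)) ^ (m-2) * (-1) ^ m) *
          (R.roots.esymm (m-2) * R.roots.esymm m) := by ring
      _ = R.leadingCoeff^2 * (R.roots.esymm (m-2) * R.roots.esymm m) := by
          rw [hsq, hsq1, mul_one]
  have h4 : R.leadingCoeff^2 * (R.roots.esymm (m-2) * R.roots.esymm m) ≤ 0 :=
    mul_nonpos_iff.mpr (Or.inl ⟨sq_nonneg _, hEE⟩)
  nlinarith [mul_pos hc1 hc2, hmul, h4]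

def sE (n : ℕ) (j : Fin n) (r : ℕ) (x : Fin n → ℝ) : ℝ :=
  ∑ t ∈ (Finset.univ.erase j).powersetCard r, ∏ i ∈ t, x i

lemma sE_zero (n : ℕ) (j : Fin n) (x : Fin n → ℝ) : sE n j 0 x = 1 := by
  simp [sE, Finset.powersetCard_zero]

lemma esymm_zero_fun (n : ℕ) (x : Fin n → ℝ) : esymm n 0 x = 1 := by
  simp [esymm, Finset.powersetCard_zero]

lemma sE_coeff (n : ℕ) (j : Fin n) (x : Fin n → ℝ) (r : ℕ) (hr : r ≤ n - 1) :
    (∏ i ∈ Finset.univ.erase j, (X + C (x i))).coeff (n - 1 - r) = sE n j r x := by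
  have hcard : (Finset.univ.erase j).card = n - 1 := by
    rw [Finset.card_erase_of_mem (Finset.mem_univ j)]
    simp
  have h : n - 1 - r ≤ (Finset.univ.erase j).card := by rw [hcard]; omega
  have e : (Finset.univ.erase j).card - (n - 1 - r) = r := by rw [hcard]; omega
  rw [Finset.prod_X_add_C_coeff _ _ h, e, sE]

lemma update_decomp (n : ℕ) (j : Fin n) (x : Fin n → ℝ) (v : ℝ) (m : ℕ)
    (hm1 : 1 ≤ m) (hmn : m ≤ n) :
    esymm n m (Function.update x j v) = sE n j m x + v * sE n j (m-1) x := by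
  have hsplit : (∏ i, (X + C (Function.update x j v i))) =
      (X + C v) * ∏ i ∈ Finset.univ.erase j, (X + C (x i)) := by
    rw [← Finset.mul_prod_erase Finset.univ _ (Finset.mem_univ j)]
    congr 1
    · rw [Function.update_self]
    · exact Finset.prod_congr rfl fun i hi => by
        rw [Function.update_of_ne (Finset.ne_of_mem_erase hi)]
  set Q : ℝ[X] := ∏ i ∈ Finset.univ.erase j, (X + C (x i)) with hQ
  have hL : esymm n m (Function.update x j v) = ((X + C v) * Q).coeff (n - m) := by
    rw [← hsplit, esymm_coeff n _ m hmn]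
  have hexp : ((X + C v) * Q).coeff (n - m) = (X * Q).coeff (n - m) + v * Q.coeff (n - m) := by
    rw [add_mul, coeff_add, coeff_C_mul]
  have hQ2 : Q.coeff (n - m) = sE n j (m-1) x := by
    have e : n - m = n - 1 - (m - 1) := by omega
    rw [e, sE_coeff n j x (m-1) (by omega)]
  rcases eq_or_lt_of_le hmn with hmeq | hmlt
  · -- m = n
    have h0 : n - m = 0 := by omega
    have hXQ : (X * Q).coeff (n - m) = 0 := by
      rw [h0, Polynomial.mul_coeff_zero, coeff_X_zero, zero_mul]
    have hsEm : sE n j m x = 0 := by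
      have : (Finset.univ.erase j).card < m := by
        rw [Finset.card_erase_of_mem (Finset.mem_univ j)]
        simp
        omega
      rw [sE, Finset.powersetCard_eq_empty.mpr this, Finset.sum_empty]
    rw [hL, hexp, hXQ, hQ2, hsEm, zero_add]
  · -- m < n
    have hk : n - m = (n - m - 1) + 1 := by omega
    have hXQ : (X * Q).coeff (n - m) = sE n j m x := by
      rw [hk, coeff_X_mul]
      have e : n - m - 1 = n - 1 - m := by omega
      rw [e, sE_coeff n j x m (by omega)]
    rw [hL, hexp, hXQ, hQ2]

lemma decomp (n : ℕ) (j : Fin n) (x : Fin n → ℝ) (m : ℕ) (hm1 : 1 ≤ m) (hmn : m ≤ n) :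
    esymm n m x = sE n j m x + x j * sE n j (m-1) x := by
  have h := update_decomp n j x (x j) m hm1 hmn
  rwa [Function.update_eq_self] at h

lemma sE_pos (n : ℕ) : ∀ (m : ℕ), 1 ≤ m → m ≤ n → ∀ x : Fin n → ℝ, x ∈ Gamma n m →
    ∀ j : Fin n, 0 < sE n j (m-1) x := by
  intro m
  induction m using Nat.strong_induction_on with
  | _ m ih =>
    intro hm1 hmn x hx j
    rcases eq_or_lt_of_le hm1 with h1 | h2
    · rw [← h1, Nat.sub_self]
      rw [sE_zero]
      norm_num
    · by_contra hA'
      push_neg at hA'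
      have hxG : ∀ r : ℕ, 1 ≤ r → r ≤ m → 0 < esymm n r x := hx
      set A := sE n j (m-1) x with hAdef
      have hC : 0 < sE n j (m-2) x := by
        have h := ih (m-1) (by omega) (by omega) (by omega) x
          (fun r hr1 hr2 => hxG r hr1 (by omega)) j
        have e : m - 1 - 1 = m - 2 := by omega
        rwa [e] at h
      set C := sE n j (m-2) x with hCdef
      have hd1 : esymm n (m-1) x = A + x j * C := by
        have h := decomp n j x (m-1) (by omega) (by omega)
        have e : m - 1 - 1 = m - 2 := by omega
        rwa [e] at h
      have hσm1 : 0 < esymm n (m-1) x := hxG (m-1) (by omega) (by omega)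
      have hσm : 0 < esymm n m x := hxG m (by omega) (by omega)
      have hxj : 0 < x j := by
        by_contra hxj'
        push_neg at hxj'
        have : x j * C ≤ 0 := mul_nonpos_iff.mpr (Or.inr ⟨hxj', le_of_lt hC⟩)
        linarith
      set v : ℝ := -A / C with hv
      have hv0 : 0 ≤ v := div_nonneg (by linarith) (le_of_lt hC)
      have hvC : v * C = -A := div_mul_cancel₀ _ (ne_of_gt hC)
      have hvxj : v ≤ x j := by
        rw [hv, div_le_iff₀ hC]
        linarith
      have hw1 : esymm n (m-1) (Function.update x j v) = 0 := by
        have h := update_decomp n j x v (m-1) (by omega) (by omega)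
        have e : m - 1 - 1 = m - 2 := by omega
        rw [e] at h
        rw [h, ← hAdef, ← hCdef, hvC]
        ring
      have hdm : esymm n m x = sE n j m x + x j * A := by
        have h := decomp n j x m (by omega) hmn
        rwa [← hAdef] at h
      have hw3 : 0 < esymm n m (Function.update x j v) := by
        have h := update_decomp n j x v m (by omega) hmn
        rw [← hAdef] at h
        have hprod : x j * A ≤ v * A := by nlinarith
        nlinarith
      have hw2 : 0 < esymm n (m-2) (Function.update x j v) := by
        rcases eq_or_lt_of_le (Nat.succ_le_of_lt h2) with h22 | h23
        · have e : m - 2 = 0 := by omega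
          rw [e, esymm_zero_fun]
          norm_num
        · have h := update_decomp n j x v (m-2) (by omega) (by omega)
          have hD : 0 < sE n j (m-2-1) x := by
            have hh := ih (m-2) (by omega) (by omega) (by omega) x
              (fun r hr1 hr2 => hxG r hr1 (by omega)) j
            exact hh
          rw [h, ← hCdef]
          nlinarith
      have hnewton := newton n (Function.update x j v) m (by omega) hmn hw1
      nlinarith [mul_pos hw2 hw3]

lemma gamma_update (n k : ℕ) (hkn : k ≤ n) (x : Fin n → ℝ) (hx : x ∈ Gamma n k)
    (j : Fin n) (t : ℝ) (ht : 0 ≤ t) : Function.update x j (x j + t) ∈ Gamma n k := by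
  intro m hm1 hmk
  have hmn : m ≤ n := le_trans hmk hkn
  have hd := update_decomp n j x (x j + t) m hm1 hmn
  have hd0 := decomp n j x m hm1 hmn
  have hpos := sE_pos n m hm1 hmn x (fun r hr1 hr2 => hx r hr1 (le_trans hr2 hmk)) j
  have hσ : 0 < esymm n m x := hx m hm1 hmk
  rw [hd]
  nlinarith

lemma gamma_mono (n k : ℕ) (hkn : k ≤ n) (x y : Fin n → ℝ) (hx : x ∈ Gamma n k)
    (hxy : ∀ i, x i ≤ y i) : y ∈ Gamma n k := by
  have key : ∀ s : Finset (Fin n), (fun i => if i ∈ s then y i else x i) ∈ Gamma n k := by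
    intro s
    induction s using Finset.induction_on with
    | empty =>
        have e : (fun i => if i ∈ (∅ : Finset (Fin n)) then y i else x i) = x :=
          funext fun i => by simp
        rw [e]; exact hx
    | @insert a s ha ih =>
        have e : (fun i => if i ∈ insert a s then y i else x i) =
            Function.update (fun i => if i ∈ s then y i else x i) a
              ((fun i => if i ∈ s then y i else x i) a + (y a - x a)) := by
          funext i
          by_cases hia : i = a
          · subst hia
            simp [Function.update_self, ha]
          · rw [Function.update_of_ne hia]
            simp [Finset.mem_insert, hia]
        rw [e]
        exact gamma_update n k hkn _ ih a _ (by linarith [hxy a])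
  have h := key Finset.univ
  have e : (fun i => if i ∈ (Finset.univ : Finset (Fin n)) then y i else x i) = y :=
    funext fun i => by simp
  rwa [e] at h

lemma esymm_smul (n m : ℕ) (c : ℝ) (x : Fin n → ℝ) :
    esymm n m (fun i => c * x i) = c^m * esymm n m x := by
  rw [esymm, esymm, Finset.mul_sum]
  apply Finset.sum_congr rfl
  intro t ht
  rw [Finset.prod_mul_distrib, Finset.prod_const, (Finset.mem_powersetCard.mp ht).2]

lemma gamma_smul (n k : ℕ) (c : ℝ) (hc : 0 < c) (x : Fin n → ℝ) (hx : x ∈ Gamma n k) :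
    (fun i => c * x i) ∈ Gamma n k := by
  intro m hm1 hmk
  have h : esymm n m (fun i => c * x i) = c^m * esymm n m x := esymm_smul n m c x
  rw [h]
  exact mul_pos (pow_pos hc m) (hx m hm1 hmk)

end MyAux

/-- If `κ ∈ Γ̃_k` and `t ≥ 0` then `κ + t e_i ∈ Γ̃_k` for each standard basis
vector `e_i`. Moreover if `κ ∈ Γ̃_k` with `κ_n > 0` and `0 < w < 1`, then
`(κ_1/w, …, κ_{n−1}/w, κ_n/w³) ∈ Γ̃_k`. -/
theorem stmt_7 (n k : ℕ) (hk1 : 1 ≤ k) (hkn : k ≤ n) :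
    (∀ κ ∈ GammaT n k, ∀ t : ℝ, 0 ≤ t → ∀ i : Fin n,
        κ + t • (Pi.single i 1 : Fin n → ℝ) ∈ GammaT n k) ∧
    (∀ κ ∈ GammaT n k, ∀ w : ℝ, 0 < w → w < 1 → 0 < κ ⟨n - 1, by omega⟩ →
        (fun j : Fin n => if (j : ℕ) = n - 1 then κ j / w ^ 3 else κ j / w) ∈ GammaT n k) := by
  constructor
  · intro κ hκ t ht i
    show lamEta n (κ + t • (Pi.single i 1 : Fin n → ℝ)) ∈ Gamma n k
    apply MyAux.gamma_mono n k hkn (lamEta n κ) _ hκ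
    intro j
    have e : lamEta n (κ + t • (Pi.single i 1 : Fin n → ℝ)) j
        = lamEta n κ j + ∑ l ∈ Finset.univ.erase j, t * (Pi.single i 1 : Fin n → ℝ) l := by
      rw [lamEta, lamEta, ← Finset.sum_add_distrib]
      apply Finset.sum_congr rfl
      intro l _
      simp [Pi.single_apply]
    rw [e]
    have hnn : 0 ≤ ∑ l ∈ Finset.univ.erase j, t * (Pi.single i 1 : Fin n → ℝ) l := by
      apply Finset.sum_nonneg
      intro l _
      rw [Pi.single_apply]
      by_cases hl : l = i <;> simp [hl, ht]
    linarith
  · intro κ hκ w hw0 hw1 hκn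
    have hn1 : 1 ≤ n := le_trans hk1 hkn
    set e : Fin n := ⟨n - 1, by omega⟩ with he
    set κ' : Fin n → ℝ := fun j => if (j : ℕ) = n - 1 then κ j / w ^ 3 else κ j / w with hκ'
    show lamEta n κ' ∈ Gamma n k
    have hscaled : (fun j => (1/w) * lamEta n κ j) ∈ Gamma n k :=
      MyAux.gamma_smul n k (1/w) (by positivity) _ hκ
    apply MyAux.gamma_mono n k hkn _ _ hscaled
    intro j
    have hcoe : ∀ l : Fin n, (l : ℕ) = n - 1 ↔ l = e := by
      intro l
      constructor
      · intro h; exact Fin.ext h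
      · intro h; rw [h]
    by_cases hj : j = e
    · have ev : lamEta n κ' j = (1/w) * lamEta n κ j := by
        rw [lamEta, lamEta, Finset.mul_sum]
        apply Finset.sum_congr rfl
        intro l hl
        have hlne : l ≠ j := Finset.ne_of_mem_erase hl
        have : ¬ ((l : ℕ) = n - 1) := fun h => hlne (((hcoe l).mp h).trans hj.symm)
        rw [hκ']
        simp only [this, if_false]
        ring
      rw [ev]
    · have hej : e ∈ Finset.univ.erase j :=
        Finset.mem_erase.mpr ⟨fun h => hj (h ▸ rfl), Finset.mem_univ e⟩
      have split1 : lamEta n κ' j = κ' e + ∑ l ∈ (Finset.univ.erase j).erase e, κ' l := by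
        rw [lamEta, ← Finset.add_sum_erase _ _ hej]
      have split2 : lamEta n κ j = κ e + ∑ l ∈ (Finset.univ.erase j).erase e, κ l := by
        rw [lamEta, ← Finset.add_sum_erase _ _ hej]
      have hsum : ∑ l ∈ (Finset.univ.erase j).erase e, κ' l
          = ∑ l ∈ (Finset.univ.erase j).erase e, (1/w) * κ l := by
        apply Finset.sum_congr rfl
        intro l hl
        have hlne : l ≠ e := Finset.ne_of_mem_erase hl
        have : ¬ ((l : ℕ) = n - 1) := fun h => hlne ((hcoe l).mp h)
        rw [hκ']
        simp only [this, if_false]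
        ring
      have hκe' : κ' e = κ e / w ^ 3 := by
        rw [hκ']
        simp [he]
      have hκe : 0 < κ e := hκn
      have hdiv : (1/w) * κ e ≤ κ e / w ^ 3 := by
        have h1 : (1/w) * κ e = κ e / w := by ring
        rw [h1, div_le_div_iff₀ hw0 (by positivity)]
        nlinarith [mul_pos (mul_pos hκn hw0) (mul_pos (show (0:ℝ) < 1 - w by linarith) (show (0:ℝ) < 1 + w by linarith))]
      rw [split1, split2, hsum, hκe', mul_add, Finset.mul_sum]
      linarith
end
end

section
/- Let 2 ≤ k ≤ n−1 and let λ = (λ_1,…,λ_n) ∈ ℝⁿ be ordered λ_1 ≤ λ_2 ≤ ⋯ ≤ λ_n with λ_1 < 0 and λ_2 > 0. Then σ_k(λ) ≥ (λ_{n−k+1} + C(n−1,k−1) λ_1) · λ_n λ_{n−1} ⋯ λ_{n−k+2}, where C(n−1,k−1) is the binomial coefficient. In particular, if in addition λ_{n−k+1} ≥ −2 C(n−1,k−1) λ_1, then σ_k(λ) ≥ (1/2) λ_n λ_{n−1} ⋯ λ_{n−k+1}. -/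
noncomputable section

/-- Let `2 ≤ k ≤ n−1` and `λ_1 ≤ ⋯ ≤ λ_n` with `λ_1 < 0 < λ_2`. Then
`σ_k(λ) ≥ (λ_{n−k+1} + C(n−1,k−1) λ_1) · λ_n ⋯ λ_{n−k+2}` (the product of the `k−1`
largest entries); and if moreover `λ_{n−k+1} ≥ −2 C(n−1,k−1) λ_1` then
`σ_k(λ) ≥ (1/2) λ_n ⋯ λ_{n−k+1}` (the product of the `k` largest entries). -/
theorem stmt_9 (n k : ℕ) (hk2 : 2 ≤ k) (hkn : k ≤ n - 1) (hn : 2 ≤ n)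
    (lam : Fin n → ℝ) (hmono : Monotone lam)
    (h1 : lam ⟨0, by omega⟩ < 0) (h2 : 0 < lam ⟨1, by omega⟩) :
    ((lam ⟨n - k, by omega⟩ + ((n - 1).choose (k - 1) : ℝ) * lam ⟨0, by omega⟩) *
        ∏ i ∈ Finset.univ.filter (fun i : Fin n => n - k + 1 ≤ (i : ℕ)), lam i
      ≤ esymm n k lam) ∧
    (-(2 * ((n - 1).choose (k - 1) : ℝ)) * lam ⟨0, by omega⟩ ≤ lam ⟨n - k, by omega⟩ →
      (1 / 2) * ∏ i ∈ Finset.univ.filter (fun i : Fin n => n - k ≤ (i : ℕ)), lam i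
        ≤ esymm n k lam) := by
  have hnk1 : 1 ≤ n - k := by omega
  have hkn' : k ≤ n := by omega
  set e0 : Fin n := ⟨0, by omega⟩ with he0
  set x1 : Fin n := ⟨n - k, by omega⟩ with hx1
  set B : Finset (Fin n) := Finset.univ.filter (fun i : Fin n => n - k + 1 ≤ (i : ℕ)) with hB
  set A : Finset (Fin n) := Finset.univ.filter (fun i : Fin n => n - k ≤ (i : ℕ)) with hAdef
  have hposi : ∀ i : Fin n, i ≠ e0 → 0 < lam i := by
    intro i hi
    have h1le : 1 ≤ (i : ℕ) := by
      rcases Nat.eq_zero_or_pos (i : ℕ) with h | h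
      · exact absurd (Fin.ext h) hi
      · exact h
    exact lt_of_lt_of_le h2 (hmono (by simpa [Fin.le_def] using h1le))
  have hBpos : ∀ i ∈ B, 0 < lam i := by
    intro i hi
    apply hposi
    simp only [hB, Finset.mem_filter, Finset.mem_univ, true_and] at hi
    intro h
    rw [h] at hi
    simp [he0] at hi
  have hPpos : 0 < ∏ i ∈ B, lam i := Finset.prod_pos hBpos
  have hx1ne : x1 ≠ e0 := by
    simp only [hx1, he0, ne_eq, Fin.mk.injEq]
    omega
  have hx1pos : 0 < lam x1 := hposi x1 hx1ne
  have hx1B : x1 ∉ B := by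
    simp only [hB, Finset.mem_filter, Finset.mem_univ, true_and, hx1]
    omega
  have hAins : A = insert x1 B := by
    ext i
    simp only [hAdef, hB, Finset.mem_filter, Finset.mem_univ, true_and, Finset.mem_insert,
      hx1, Fin.ext_iff]
    omega
  have hcardB : B.card = k - 1 := by
    have hBI : B = Finset.Ici (⟨n - k + 1, by omega⟩ : Fin n) := by
      ext i
      simp [hB, Fin.le_def]
    rw [hBI, Fin.card_Ici]
    simp only [Fin.val_mk]
    omega
  -- key lemma
  have key : ∀ s : Finset (Fin n), e0 ∉ s → s.card = k - 1 →
      ∏ i ∈ s, lam i ≤ ∏ i ∈ B, lam i := by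
    intro s hes hcard
    have hspos : ∀ i ∈ s, 0 < lam i := fun i hi => hposi i (fun h => hes (h ▸ hi))
    have hm : (s \ B).card = (B \ s).card := by
      have h1' := Finset.card_sdiff_add_card_inter s B
      have h2' := Finset.card_sdiff_add_card_inter B s
      rw [Finset.inter_comm] at h2'
      omega
    have hub : ∏ i ∈ s \ B, lam i ≤ lam x1 ^ (s \ B).card := by
      rw [← Finset.prod_const]
      apply Finset.prod_le_prod
      · intro i hi
        exact (hspos i (Finset.mem_sdiff.mp hi).1).le
      · intro i hi
        obtain ⟨hi1, hi2⟩ := Finset.mem_sdiff.mp hi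
        have hle : (i : ℕ) ≤ n - k := by
          simp only [hB, Finset.mem_filter, Finset.mem_univ, true_and] at hi2
          omega
        exact hmono (by simpa [Fin.le_def, hx1] using hle)
    have hlb : lam x1 ^ (B \ s).card ≤ ∏ i ∈ B \ s, lam i := by
      rw [← Finset.prod_const]
      apply Finset.prod_le_prod
      · intro i _
        exact hx1pos.le
      · intro i hi
        obtain ⟨hi1, _⟩ := Finset.mem_sdiff.mp hi
        have hge : n - k + 1 ≤ (i : ℕ) := by
          simpa [hB] using hi1
        exact hmono (by simp only [Fin.le_def, hx1]; omega)
    calc ∏ i ∈ s, lam i = (∏ i ∈ s ∩ B, lam i) * ∏ i ∈ s \ B, lam i :=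
          (Finset.prod_inter_mul_prod_diff s B _).symm
      _ ≤ (∏ i ∈ s ∩ B, lam i) * lam x1 ^ (s \ B).card := by
          apply mul_le_mul_of_nonneg_left hub
          exact Finset.prod_nonneg fun i hi => (hspos i (Finset.mem_inter.mp hi).1).le
      _ = (∏ i ∈ B ∩ s, lam i) * lam x1 ^ (B \ s).card := by
          rw [Finset.inter_comm, hm]
      _ ≤ (∏ i ∈ B ∩ s, lam i) * ∏ i ∈ B \ s, lam i := by
          apply mul_le_mul_of_nonneg_left hlb
          exact Finset.prod_nonneg fun i hi => (hBpos i (Finset.mem_inter.mp hi).1).le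
      _ = ∏ i ∈ B, lam i := Finset.prod_inter_mul_prod_diff B s _
  -- decomposition of esymm
  set U' : Finset (Fin n) := Finset.univ.erase e0 with hU'
  have he0U' : e0 ∉ U' := Finset.notMem_erase _ _
  have hins : (Finset.univ : Finset (Fin n)) = insert e0 U' :=
    (Finset.insert_erase (Finset.mem_univ e0)).symm
  have hcardU' : U'.card = n - 1 := by
    rw [hU', Finset.card_erase_of_mem (Finset.mem_univ e0), Finset.card_univ, Fintype.card_fin]
  have hksucc : k = (k - 1) + 1 := by omega
  have hsplit : (Finset.univ : Finset (Fin n)).powersetCard k =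
      U'.powersetCard k ∪ (U'.powersetCard (k - 1)).image (insert e0) := by
    conv_lhs => rw [hins, hksucc]
    rw [Finset.powersetCard_succ_insert he0U', Nat.succ_eq_add_one, ← hksucc]
  have hdisj : Disjoint (U'.powersetCard k) ((U'.powersetCard (k - 1)).image (insert e0)) := by
    rw [Finset.disjoint_left]
    intro s hs ht
    obtain ⟨t, ht', heq⟩ := Finset.mem_image.mp ht
    have hsub : s ⊆ U' := (Finset.mem_powersetCard.mp hs).1
    exact he0U' (hsub (heq ▸ Finset.mem_insert_self e0 t))
  have hesymm : esymm n k lam =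
      (∑ s ∈ U'.powersetCard k, ∏ i ∈ s, lam i) +
      ∑ s ∈ U'.powersetCard (k - 1), lam e0 * ∏ i ∈ s, lam i := by
    rw [esymm, hsplit, Finset.sum_union hdisj]
    congr 1
    rw [Finset.sum_image]
    · apply Finset.sum_congr rfl
      intro s hs
      have hes : e0 ∉ s := fun h => he0U' ((Finset.mem_powersetCard.mp hs).1 h)
      rw [Finset.prod_insert hes]
    · intro s hs t ht hst
      have hes : e0 ∉ s := fun h => he0U' ((Finset.mem_powersetCard.mp hs).1 h)
      have het : e0 ∉ t := fun h => he0U' ((Finset.mem_powersetCard.mp ht).1 h)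
      rw [← Finset.erase_insert hes, ← Finset.erase_insert het, hst]
  -- first sum ≥ ∏ A
  have hAU : A ∈ U'.powersetCard k := by
    rw [Finset.mem_powersetCard]
    constructor
    · intro i hi
      simp only [hAdef, Finset.mem_filter, Finset.mem_univ, true_and] at hi
      rw [hU', Finset.mem_erase]
      refine ⟨?_, Finset.mem_univ i⟩
      intro h
      rw [h] at hi
      simp [he0] at hi
      omega
    · rw [hAins, Finset.card_insert_of_notMem hx1B, hcardB]
      omega
  have hsum1 : ∏ i ∈ A, lam i ≤ ∑ s ∈ U'.powersetCard k, ∏ i ∈ s, lam i := by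
    apply Finset.single_le_sum (f := fun s => ∏ i ∈ s, lam i) _ hAU
    intro s hs
    apply Finset.prod_nonneg
    intro i hi
    have hsub : s ⊆ U' := (Finset.mem_powersetCard.mp hs).1
    exact (hposi i (fun h => he0U' (h ▸ hsub hi))).le
  -- second sum ≥ choose * (lam e0 * P)
  have hcardPC : (U'.powersetCard (k - 1)).card = (n - 1).choose (k - 1) := by
    rw [Finset.card_powersetCard, hcardU']
  have hsum2 : ((n - 1).choose (k - 1) : ℝ) * (lam e0 * ∏ i ∈ B, lam i) ≤
      ∑ s ∈ U'.powersetCard (k - 1), lam e0 * ∏ i ∈ s, lam i := by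
    have := Finset.card_nsmul_le_sum (U'.powersetCard (k - 1))
      (fun s => lam e0 * ∏ i ∈ s, lam i) (lam e0 * ∏ i ∈ B, lam i) ?_
    · rw [hcardPC] at this
      simpa [nsmul_eq_mul] using this
    · intro s hs
      obtain ⟨hsub, hcard⟩ := Finset.mem_powersetCard.mp hs
      have hes : e0 ∉ s := fun h => he0U' (hsub h)
      exact mul_le_mul_of_nonpos_left (key s hes hcard) h1.le
  have hprodA : ∏ i ∈ A, lam i = lam x1 * ∏ i ∈ B, lam i := by
    rw [hAins, Finset.prod_insert hx1B]
  have hmain : (lam x1 + ((n - 1).choose (k - 1) : ℝ) * lam e0) * ∏ i ∈ B, lam i ≤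
      esymm n k lam := by
    rw [hesymm]
    have := hsum1
    rw [hprodA] at this
    nlinarith [hsum2]
  refine ⟨hmain, fun hcond => ?_⟩
  have hcond' : -(2 * ((n - 1).choose (k - 1) : ℝ)) * lam e0 ≤ lam x1 := hcond
  rw [show (∏ i ∈ Finset.univ.filter (fun i : Fin n => n - k ≤ (i : ℕ)), lam i) =
      lam x1 * ∏ i ∈ B, lam i from hprodA]
  nlinarith [hmain, hPpos]
end
end

section
/- Let n ≥ 3 and 0 ≤ l < k < n. There exist constants ε_0 = ε_0(n,k) > 0 and C = C(n,k,l) > 0 with the following property: if κ = (κ_1,…,κ_n) ∈ Γ̃_k is ordered κ_1 ≥ κ_2 ≥ ⋯ ≥ κ_n, and for some index r one has κ_r > 0 and κ_n ≥ −ε_0 κ_r, then (∂F/∂κ_r)(κ) · κ_r ≤ C · F(κ), where F(κ) = σ_k(λ(κ))/σ_l(λ(κ)). -/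
noncomputable section

namespace Stmt10Aux
open Finset

variable {n : ℕ}

/-- The linear functional `κ ↦ ∑_{j ≠ i} κ j`. -/
def ell (n : ℕ) (i : Fin n) : (Fin n → ℝ) →L[ℝ] ℝ :=
  ∑ j ∈ Finset.univ.erase i, ContinuousLinearMap.proj j

lemma hasFDerivAt_lamEta (κ : Fin n → ℝ) (i : Fin n) :
    HasFDerivAt (fun κ => lamEta n κ i) (ell n i) κ := by
  have : HasFDerivAt (fun κ : Fin n → ℝ => ∑ j ∈ Finset.univ.erase i, κ j)
      (∑ j ∈ Finset.univ.erase i,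
        (ContinuousLinearMap.proj (R := ℝ) (φ := fun _ : Fin n => ℝ) j)) κ :=
    HasFDerivAt.fun_sum fun j _ =>
      (ContinuousLinearMap.proj (R := ℝ) (φ := fun _ : Fin n => ℝ) j).hasFDerivAt
  exact this

/-- Derivative (as a CLM) of `κ ↦ σ_m(λ(κ))`. -/
def esymmDeriv (n m : ℕ) (κ : Fin n → ℝ) : (Fin n → ℝ) →L[ℝ] ℝ :=
  ∑ s ∈ (Finset.univ : Finset (Fin n)).powersetCard m,
    ∑ i ∈ s, (∏ j ∈ s.erase i, lamEta n κ j) • ell n i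

lemma hasFDerivAt_esymm_lam (m : ℕ) (κ : Fin n → ℝ) :
    HasFDerivAt (fun κ => esymm n m (lamEta n κ)) (esymmDeriv n m κ) κ := by
  have h : ∀ s ∈ (Finset.univ : Finset (Fin n)).powersetCard m,
      HasFDerivAt (fun κ => ∏ i ∈ s, lamEta n κ i)
        (∑ i ∈ s, (∏ j ∈ s.erase i, lamEta n κ j) • ell n i) κ :=
    fun s _ => HasFDerivAt.finset_prod fun i _ => hasFDerivAt_lamEta κ i
  exact HasFDerivAt.fun_sum h

lemma ell_apply_single (i r : Fin n) :
    ell n i (Pi.single r 1) = if i = r then 0 else 1 := by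
  rw [ell, ContinuousLinearMap.sum_apply]
  simp only [ContinuousLinearMap.proj_apply]
  by_cases h : i = r
  · subst h
    rw [if_pos rfl]
    exact Finset.sum_eq_zero fun j hj => Pi.single_eq_of_ne (Finset.ne_of_mem_erase hj) 1
  · rw [if_neg h, Finset.sum_eq_single r]
    · simp
    · intro j _ hjr
      exact Pi.single_eq_of_ne hjr 1
    · intro hr
      exact absurd (Finset.mem_erase.mpr ⟨fun hh => h hh.symm, Finset.mem_univ r⟩) hr

/-- The directional derivative value. -/
def dirDeriv (n m : ℕ) (κ : Fin n → ℝ) (r : Fin n) : ℝ :=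
  ∑ s ∈ (Finset.univ : Finset (Fin n)).powersetCard m,
    ∑ i ∈ s.erase r, ∏ j ∈ s.erase i, lamEta n κ j

lemma esymmDeriv_apply_single (m : ℕ) (κ : Fin n → ℝ) (r : Fin n) :
    esymmDeriv n m κ (Pi.single r 1) = dirDeriv n m κ r := by
  rw [esymmDeriv, dirDeriv, ContinuousLinearMap.sum_apply]
  refine Finset.sum_congr rfl fun s _ => ?_
  rw [ContinuousLinearMap.sum_apply]
  simp only [ContinuousLinearMap.smul_apply, ell_apply_single, smul_eq_mul]
  rw [← Finset.sum_erase s (a := r)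
    (f := fun i => (∏ j ∈ s.erase i, lamEta n κ j) * if i = r then 0 else 1) (by simp)]
  refine Finset.sum_congr rfl fun i hi => ?_
  rw [if_neg (Finset.ne_of_mem_erase hi), mul_one]



lemma fderiv_Fquot_single {k l : ℕ} {κ : Fin n → ℝ} (r : Fin n)
    (hQ : esymm n l (lamEta n κ) ≠ 0) :
    fderiv ℝ (Fquot n k l) κ (Pi.single r 1)
      = dirDeriv n k κ r * (esymm n l (lamEta n κ))⁻¹
        - esymm n k (lamEta n κ) * dirDeriv n l κ r * ((esymm n l (lamEta n κ)) ^ 2)⁻¹ := by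
  have hN := hasFDerivAt_esymm_lam (n := n) k κ
  have hD := hasFDerivAt_esymm_lam (n := n) l κ
  have hInv : HasFDerivAt (fun κ => (esymm n l (lamEta n κ))⁻¹)
      ((-((esymm n l (lamEta n κ)) ^ 2)⁻¹) • esymmDeriv n l κ) κ :=
    (hasDerivAt_inv hQ).comp_hasFDerivAt κ hD
  have hF : HasFDerivAt (Fquot n k l)
      (esymm n k (lamEta n κ) • ((-((esymm n l (lamEta n κ)) ^ 2)⁻¹) • esymmDeriv n l κ)
        + (esymm n l (lamEta n κ))⁻¹ • esymmDeriv n k κ) κ := by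
    have := hN.mul hInv
    have heq : Fquot n k l = fun κ =>
        esymm n k (lamEta n κ) * (esymm n l (lamEta n κ))⁻¹ := by
      funext y; rw [Fquot, div_eq_mul_inv]
    rw [heq]
    exact this
  rw [hF.fderiv]
  simp only [ContinuousLinearMap.add_apply, ContinuousLinearMap.smul_apply,
    esymmDeriv_apply_single, smul_eq_mul]
  ring

end Stmt10Aux


namespace Stmt10Aux
open Finset

variable {n : ℕ}

def eOn (B : Finset (Fin n)) (m : ℕ) (x : Fin n → ℝ) : ℝ :=
  ∑ s ∈ B.powersetCard m, ∏ i ∈ s, x i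

lemma prod_nonneg_of_subset {B : Finset (Fin n)} {x : Fin n → ℝ}
    (hx : ∀ i ∈ B, 0 ≤ x i) {s : Finset (Fin n)} (hs : s ⊆ B) :
    0 ≤ ∏ i ∈ s, x i :=
  Finset.prod_nonneg fun i hi => hx i (hs hi)

lemma eOn_nonneg {B : Finset (Fin n)} {x : Fin n → ℝ} (hx : ∀ i ∈ B, 0 ≤ x i) (m : ℕ) :
    0 ≤ eOn B m x :=
  Finset.sum_nonneg fun s hs => prod_nonneg_of_subset hx (Finset.mem_powersetCard.mp hs).1

lemma prod_le_eOn {B : Finset (Fin n)} {x : Fin n → ℝ} (hx : ∀ i ∈ B, 0 ≤ x i)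
    {m : ℕ} {s : Finset (Fin n)} (hs : s ∈ B.powersetCard m) :
    ∏ i ∈ s, x i ≤ eOn B m x :=
  Finset.single_le_sum (fun t ht => prod_nonneg_of_subset hx (Finset.mem_powersetCard.mp ht).1) hs

lemma step {B : Finset (Fin n)} {x : Fin n → ℝ} {t : ℝ} (ht : 0 ≤ t)
    (hx : ∀ i ∈ B, t / 2 ≤ x i) {m : ℕ} (hm : m < B.card) :
    t * eOn B m x ≤ (B.powersetCard m).card * (2 * eOn B (m + 1) x) := by
  have hx0 : ∀ i ∈ B, 0 ≤ x i := fun i hi => le_trans (by linarith) (hx i hi)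
  rw [eOn, Finset.mul_sum]
  calc ∑ s ∈ B.powersetCard m, t * ∏ i ∈ s, x i
      ≤ ∑ s ∈ B.powersetCard m, 2 * eOn B (m + 1) x := by
        refine Finset.sum_le_sum fun s hs => ?_
        obtain ⟨hsB, hcard⟩ := Finset.mem_powersetCard.mp hs
        have hne : (B \ s).Nonempty := by
          rw [← Finset.card_pos, Finset.card_sdiff_of_subset hsB]
          omega
        obtain ⟨j, hj⟩ := hne
        have hjB : j ∈ B := (Finset.mem_sdiff.mp hj).1
        have hjs : j ∉ s := (Finset.mem_sdiff.mp hj).2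
        have h1 : t * ∏ i ∈ s, x i ≤ (2 * x j) * ∏ i ∈ s, x i := by
          refine mul_le_mul_of_nonneg_right ?_ (prod_nonneg_of_subset hx0 hsB)
          have := hx j hjB; linarith
        refine h1.trans ?_
        have h2 : (2 * x j) * ∏ i ∈ s, x i = 2 * ∏ i ∈ insert j s, x i := by
          rw [Finset.prod_insert hjs]; ring
        rw [h2]
        have h3 : insert j s ∈ B.powersetCard (m + 1) := by
          rw [Finset.mem_powersetCard]
          exact ⟨Finset.insert_subset hjB hsB, by rw [Finset.card_insert_of_notMem hjs, hcard]⟩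
        have := prod_le_eOn hx0 h3
        linarith
    _ = (B.powersetCard m).card * (2 * eOn B (m + 1) x) := by
        rw [Finset.sum_const, nsmul_eq_mul]

lemma card_powersetCard_le (B : Finset (Fin n)) (m : ℕ) :
    ((B.powersetCard m).card : ℝ) ≤ 2 ^ n := by
  have h1 : (B.powersetCard m).card ≤ B.powerset.card :=
    Finset.card_le_card (fun s hs => Finset.mem_powerset.mpr (Finset.mem_powersetCard.mp hs).1)
  have h2 : B.powerset.card = 2 ^ B.card := Finset.card_powerset B
  have h3 : B.card ≤ n := by simpa using Finset.card_le_card (Finset.subset_univ B)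
  have : (B.powersetCard m).card ≤ 2 ^ n := by
    calc (B.powersetCard m).card ≤ 2 ^ B.card := h1.trans_eq h2
      _ ≤ 2 ^ n := Nat.pow_le_pow_right (by norm_num) h3
  exact_mod_cast this

lemma eOn_insert (x : Fin n → ℝ) {r : Fin n} {B : Finset (Fin n)} (hr : r ∉ B) (m : ℕ) :
    eOn (insert r B) (m + 1) x = eOn B (m + 1) x + x r * eOn B m x := by
  rw [eOn, Finset.powersetCard_succ_insert hr]
  rw [Finset.sum_union ?hdisj]
  case hdisj =>
    rw [Finset.disjoint_left]
    rintro s hs1 hs2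
    obtain ⟨t, ht, rfl⟩ := Finset.mem_image.mp hs2
    exact hr ((Finset.mem_powersetCard.mp hs1).1 (Finset.mem_insert_self r t))
  congr 1
  rw [Finset.sum_image ?hinj]
  case hinj =>
    intro s hs t ht hst
    have hrs : r ∉ s := fun h => hr ((Finset.mem_powersetCard.mp hs).1 h)
    have hrt : r ∉ t := fun h => hr ((Finset.mem_powersetCard.mp ht).1 h)
    rw [← Finset.erase_insert hrs, hst, Finset.erase_insert hrt]
  rw [eOn, Finset.mul_sum]
  refine Finset.sum_congr rfl fun s hs => ?_
  have hrs : r ∉ s := fun h => hr ((Finset.mem_powersetCard.mp hs).1 h)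
  rw [Finset.prod_insert hrs]

lemma esymm_split (x : Fin n → ℝ) (r : Fin n) (m : ℕ) :
    esymm n (m + 1) x =
      eOn (univ.erase r) (m + 1) x + x r * eOn (univ.erase r) m x := by
  have h1 : (univ : Finset (Fin n)) = insert r (univ.erase r) := by
    rw [Finset.insert_erase (Finset.mem_univ r)]
  calc esymm n (m + 1) x
      = eOn (insert r (univ.erase r)) (m + 1) x := by rw [esymm, eOn, ← h1]
    _ = _ := eOn_insert x (Finset.notMem_erase r _) m

lemma cardA (r : Fin n) : (univ.erase r : Finset (Fin n)).card = n - 1 := by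
  rw [Finset.card_erase_of_mem (Finset.mem_univ r), Finset.card_univ, Fintype.card_fin]

/-- `σ_m` restricted to `univ.erase r` is at most `2 σ_m` under the smallness assumptions. -/
lemma eA_le {κ : Fin n → ℝ} {r : Fin n} {ε : ℝ} (hn : 3 ≤ n) {m : ℕ} (hm1 : 1 ≤ m)
    (hmn : m < n) (hκr : 0 < κ r)
    (hε2 : (n : ℝ) * ε * (2 * 2 ^ n) ≤ 1 / 2)
    (hx : ∀ i ∈ univ.erase r, κ r / 2 ≤ lamEta n κ i)
    (hxr : -((n : ℝ) * ε * κ r) ≤ lamEta n κ r)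
    (hP : 0 < esymm n m (lamEta n κ)) :
    eOn (univ.erase r) m (lamEta n κ) ≤ 2 * esymm n m (lamEta n κ) := by
  set x := lamEta n κ with hxdef
  set A := (univ.erase r : Finset (Fin n)) with hAdef
  have hA0 : ∀ i ∈ A, 0 ≤ x i := fun i hi => le_trans (by positivity) (hx i hi)
  obtain ⟨m', rfl⟩ : ∃ m', m = m' + 1 := ⟨m - 1, by omega⟩
  have hsplit := esymm_split x r m'
  have he0 : 0 ≤ eOn A m' x := eOn_nonneg hA0 m'
  have he1 : 0 ≤ eOn A (m' + 1) x := eOn_nonneg hA0 (m' + 1)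
  by_cases hxr0 : 0 ≤ x r
  · nlinarith [mul_nonneg hxr0 he0]
  · push_neg at hxr0
    have hstep : κ r * eOn A m' x ≤ (A.powersetCard m').card * (2 * eOn A (m' + 1) x) :=
      step hκr.le hx (by rw [cardA]; omega)
    have hcard : ((A.powersetCard m').card : ℝ) ≤ 2 ^ n := card_powersetCard_le A m'
    -- (−x r) * eOn A m' ≤ n ε κ r * eOn A m'
    have h2 : (-(x r)) * eOn A m' x ≤ ((n : ℝ) * ε * κ r) * eOn A m' x := by
      refine mul_le_mul_of_nonneg_right ?_ he0
      linarith
    have h3 : κ r * eOn A m' x ≤ (2 ^ n : ℝ) * (2 * eOn A (m' + 1) x) := by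
      refine hstep.trans ?_
      exact mul_le_mul_of_nonneg_right hcard (by positivity)
    -- so eOn A (m'+1) ≤ P + (n ε)(2·2^n) eOn A (m'+1) ≤ P + eOn/2
    have hnε : 0 ≤ (n : ℝ) * ε := by nlinarith [pow_pos (by norm_num : (0:ℝ) < 2) n]
    nlinarith [mul_le_mul_of_nonneg_left h3 hnε]

end Stmt10Aux

namespace Stmt10Aux
open Finset

variable {κ : Fin n → ℝ} {r : Fin n} {ε : ℝ}

set_option maxHeartbeats 2000000 in
lemma key_ub (hn : 3 ≤ n) {m : ℕ} (hm1 : 1 ≤ m) (hmn : m < n) (hκr : 0 < κ r)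
    (hε2 : (n : ℝ) * ε * (2 * 2 ^ n) ≤ 1 / 2)
    (hx : ∀ i ∈ univ.erase r, κ r / 2 ≤ lamEta n κ i)
    (hxr : -((n : ℝ) * ε * κ r) ≤ lamEta n κ r)
    (hP : 0 < esymm n m (lamEta n κ)) :
    κ r * dirDeriv n m κ r ≤ (n : ℝ) * 2 ^ n * (4 * 2 ^ n) * esymm n m (lamEta n κ) := by
  set x := lamEta n κ with hxdef
  set A := (univ.erase r : Finset (Fin n)) with hAdef
  set P := esymm n m x with hPdef
  have hA0 : ∀ i ∈ A, 0 ≤ x i := fun i hi => le_trans (by positivity) (hx i hi)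
  have hAcard : A.card = n - 1 := cardA r
  have h2pos : (0:ℝ) < 2 ^ n := by positivity
  have heA : eOn A m x ≤ 2 * P := eA_le hn hm1 hmn hκr hε2 hx hxr hP
  have hterm : ∀ s ∈ (univ : Finset (Fin n)).powersetCard m, ∀ i ∈ s.erase r,
      κ r * (∏ j ∈ s.erase i, x j) ≤ 4 * 2 ^ n * P := by
    intro s hs i hi
    obtain ⟨hsU, hscard⟩ := Finset.mem_powersetCard.mp hs
    have his : i ∈ s := Finset.mem_of_mem_erase hi
    have hucard : (s.erase i).card = m - 1 := by
      rw [Finset.card_erase_of_mem his, hscard]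
    by_cases hru : r ∈ s.erase i
    · -- the product contains x r
      have hm2 : 2 ≤ m := by
        have h1 : 1 ≤ (s.erase i).card := Finset.card_pos.mpr ⟨r, hru⟩
        omega
      set w := (s.erase i).erase r with hwdef
      have hwA : w ⊆ A := fun j hj =>
        Finset.mem_erase.mpr ⟨Finset.ne_of_mem_erase hj, Finset.mem_univ j⟩
      have hwcard : w.card = m - 2 := by
        rw [hwdef, Finset.card_erase_of_mem hru, hucard]; omega
      have hprod : ∏ j ∈ s.erase i, x j = x r * ∏ j ∈ w, x j :=
        (Finset.mul_prod_erase (s.erase i) x hru).symm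
      have hprodw : 0 ≤ ∏ j ∈ w, x j := prod_nonneg_of_subset hA0 hwA
      by_cases hxrneg : x r ≤ 0
      · have hle0 : κ r * (∏ j ∈ s.erase i, x j) ≤ 0 := by
          rw [hprod]
          have h0 : 0 ≤ κ r * ∏ j ∈ w, x j := mul_nonneg hκr.le hprodw
          nlinarith [h0, hxrneg]
        nlinarith
      · push_neg at hxrneg
        have hw_mem : w ∈ A.powersetCard (m - 2) := Finset.mem_powersetCard.mpr ⟨hwA, hwcard⟩
        have h1 : (∏ j ∈ w, x j) ≤ eOn A (m - 2) x := prod_le_eOn hA0 hw_mem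
        have h2 : κ r * eOn A (m - 2) x
            ≤ (A.powersetCard (m - 2)).card * (2 * eOn A (m - 2 + 1) x) :=
          step hκr.le hx (by omega)
        have h2' : ((A.powersetCard (m - 2)).card : ℝ) ≤ 2 ^ n := card_powersetCard_le _ _
        have hmm : m - 2 + 1 = m - 1 := by omega
        rw [hmm] at h2
        have he1 : 0 ≤ eOn A (m - 1) x := eOn_nonneg hA0 _
        have he2 : 0 ≤ eOn A (m - 2) x := eOn_nonneg hA0 _
        -- x r * eOn A (m-1) x ≤ P
        have hsplit : P = eOn A m x + x r * eOn A (m - 1) x := by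
          have := esymm_split x r (m - 1)
          have hmm2 : m - 1 + 1 = m := by omega
          rw [hmm2] at this
          exact this
        have heAm : 0 ≤ eOn A m x := eOn_nonneg hA0 _
        have h3 : x r * eOn A (m - 1) x ≤ P := by nlinarith
        rw [hprod]
        -- κ r * (x r * ∏ w) = x r * (κ r * ∏ w) ≤ x r * (2^n * 2 * e(m-1)) ≤ 2·2^n · P
        have h4 : κ r * (∏ j ∈ w, x j) ≤ 2 ^ n * (2 * eOn A (m - 1) x) := by
          calc κ r * (∏ j ∈ w, x j) ≤ κ r * eOn A (m - 2) x :=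
                mul_le_mul_of_nonneg_left h1 hκr.le
            _ ≤ ((A.powersetCard (m - 2)).card : ℝ) * (2 * eOn A (m - 1) x) := h2
            _ ≤ 2 ^ n * (2 * eOn A (m - 1) x) :=
                mul_le_mul_of_nonneg_right h2' (by positivity)
        nlinarith [mul_le_mul_of_nonneg_left h4 hxrneg.le]
    · -- r not in the product
      have huA : s.erase i ⊆ A := by
        intro j hj
        refine Finset.mem_erase.mpr ⟨?_, Finset.mem_univ j⟩
        rintro rfl; exact hru hj
      have hu_mem : s.erase i ∈ A.powersetCard (m - 1) :=
        Finset.mem_powersetCard.mpr ⟨huA, hucard⟩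
      have h1 : (∏ j ∈ s.erase i, x j) ≤ eOn A (m - 1) x := prod_le_eOn hA0 hu_mem
      have h2 : κ r * eOn A (m - 1) x
          ≤ (A.powersetCard (m - 1)).card * (2 * eOn A (m - 1 + 1) x) :=
        step hκr.le hx (by omega)
      have hmm : m - 1 + 1 = m := by omega
      rw [hmm] at h2
      have h2' : ((A.powersetCard (m - 1)).card : ℝ) ≤ 2 ^ n := card_powersetCard_le _ _
      have heAm : 0 ≤ eOn A m x := eOn_nonneg hA0 _
      calc κ r * (∏ j ∈ s.erase i, x j) ≤ κ r * eOn A (m - 1) x :=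
            mul_le_mul_of_nonneg_left h1 hκr.le
        _ ≤ ((A.powersetCard (m - 1)).card : ℝ) * (2 * eOn A m x) := h2
        _ ≤ 2 ^ n * (2 * eOn A m x) := mul_le_mul_of_nonneg_right h2' (by positivity)
        _ ≤ 4 * 2 ^ n * P := by nlinarith
  -- sum up
  have hc : (0:ℝ) ≤ 4 * 2 ^ n * P := by positivity
  calc κ r * dirDeriv n m κ r
      = ∑ s ∈ (univ : Finset (Fin n)).powersetCard m,
          ∑ i ∈ s.erase r, κ r * ∏ j ∈ s.erase i, x j := by
        rw [dirDeriv, Finset.mul_sum]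
        exact Finset.sum_congr rfl fun s _ => Finset.mul_sum _ _ _
    _ ≤ ∑ s ∈ (univ : Finset (Fin n)).powersetCard m, ((n : ℝ) * (4 * 2 ^ n * P)) := by
        refine Finset.sum_le_sum fun s hs => ?_
        calc ∑ i ∈ s.erase r, κ r * (∏ j ∈ s.erase i, x j)
            ≤ ∑ i ∈ s.erase r, (4 * 2 ^ n * P) := Finset.sum_le_sum (hterm s hs)
          _ = ((s.erase r).card : ℝ) * (4 * 2 ^ n * P) := by
              rw [Finset.sum_const, nsmul_eq_mul]
          _ ≤ (n : ℝ) * (4 * 2 ^ n * P) := by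
              refine mul_le_mul_of_nonneg_right ?_ hc
              have : (s.erase r).card ≤ n := by
                calc (s.erase r).card ≤ s.card := Finset.card_le_card (Finset.erase_subset r s)
                  _ ≤ Fintype.card (Fin n) := Finset.card_le_univ s
                  _ = n := Fintype.card_fin n
              exact_mod_cast this
    _ = (((univ : Finset (Fin n)).powersetCard m).card : ℝ) * ((n : ℝ) * (4 * 2 ^ n * P)) := by
        rw [Finset.sum_const, nsmul_eq_mul]
    _ ≤ 2 ^ n * ((n : ℝ) * (4 * 2 ^ n * P)) := by
        refine mul_le_mul_of_nonneg_right (card_powersetCard_le _ _) ?_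
        positivity
    _ = (n : ℝ) * 2 ^ n * (4 * 2 ^ n) * P := by ring

end Stmt10Aux

namespace Stmt10Aux
open Finset

variable {κ : Fin n → ℝ} {r : Fin n} {ε : ℝ}

set_option maxHeartbeats 2000000 in
lemma key_lb (hn : 3 ≤ n) {m : ℕ} (hm1 : 1 ≤ m) (hmn : m < n) (hκr : 0 < κ r)
    (hε2 : (n : ℝ) * ε * (2 * 2 ^ n) ≤ 1 / 2)
    (hε3 : (n : ℝ) * ε ≤ 1) (hε0 : 0 ≤ ε)
    (hx : ∀ i ∈ univ.erase r, κ r / 2 ≤ lamEta n κ i)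
    (hxr : -((n : ℝ) * ε * κ r) ≤ lamEta n κ r)
    (hQ : 0 < esymm n m (lamEta n κ)) :
    -((n : ℝ) * 2 ^ n * (8 * 4 ^ n) * esymm n m (lamEta n κ)) ≤ κ r * dirDeriv n m κ r := by
  set x := lamEta n κ with hxdef
  set A := (univ.erase r : Finset (Fin n)) with hAdef
  set Q := esymm n m x with hQdef
  have hA0 : ∀ i ∈ A, 0 ≤ x i := fun i hi => le_trans (by positivity) (hx i hi)
  have hAcard : A.card = n - 1 := cardA r
  have h2pos : (0:ℝ) < 2 ^ n := by positivity
  have h4pos : (0:ℝ) < 4 ^ n := by positivity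
  have heA : eOn A m x ≤ 2 * Q := eA_le hn hm1 hmn hκr hε2 hx hxr hQ
  have hnε : 0 ≤ (n : ℝ) * ε := mul_nonneg (Nat.cast_nonneg n) hε0
  have hterm : ∀ s ∈ (univ : Finset (Fin n)).powersetCard m, ∀ i ∈ s.erase r,
      -(8 * 4 ^ n * Q) ≤ κ r * (∏ j ∈ s.erase i, x j) := by
    intro s hs i hi
    obtain ⟨hsU, hscard⟩ := Finset.mem_powersetCard.mp hs
    have his : i ∈ s := Finset.mem_of_mem_erase hi
    have hucard : (s.erase i).card = m - 1 := by
      rw [Finset.card_erase_of_mem his, hscard]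
    by_cases hru : r ∈ s.erase i
    · have hm2 : 2 ≤ m := by
        have h1 : 1 ≤ (s.erase i).card := Finset.card_pos.mpr ⟨r, hru⟩
        omega
      set w := (s.erase i).erase r with hwdef
      have hwA : w ⊆ A := fun j hj =>
        Finset.mem_erase.mpr ⟨Finset.ne_of_mem_erase hj, Finset.mem_univ j⟩
      have hwcard : w.card = m - 2 := by
        rw [hwdef, Finset.card_erase_of_mem hru, hucard]; omega
      have hprod : ∏ j ∈ s.erase i, x j = x r * ∏ j ∈ w, x j :=
        (Finset.mul_prod_erase (s.erase i) x hru).symm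
      have hprodw : 0 ≤ ∏ j ∈ w, x j := prod_nonneg_of_subset hA0 hwA
      by_cases hxrpos : 0 ≤ x r
      · have h0 : 0 ≤ κ r * (x r * ∏ j ∈ w, x j) := by positivity
        rw [hprod]
        nlinarith
      · push_neg at hxrpos
        have hw_mem : w ∈ A.powersetCard (m - 2) := Finset.mem_powersetCard.mpr ⟨hwA, hwcard⟩
        have h1 : (∏ j ∈ w, x j) ≤ eOn A (m - 2) x := prod_le_eOn hA0 hw_mem
        have h2 : κ r * eOn A (m - 2) x
            ≤ (A.powersetCard (m - 2)).card * (2 * eOn A (m - 2 + 1) x) :=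
          step hκr.le hx (by omega)
        have hmm : m - 2 + 1 = m - 1 := by omega
        rw [hmm] at h2
        have h2' : ((A.powersetCard (m - 2)).card : ℝ) ≤ 2 ^ n := card_powersetCard_le _ _
        have h3 : κ r * eOn A (m - 1) x
            ≤ (A.powersetCard (m - 1)).card * (2 * eOn A (m - 1 + 1) x) :=
          step hκr.le hx (by omega)
        have hmm2 : m - 1 + 1 = m := by omega
        rw [hmm2] at h3
        have h3' : ((A.powersetCard (m - 1)).card : ℝ) ≤ 2 ^ n := card_powersetCard_le _ _
        have he1 : 0 ≤ eOn A (m - 1) x := eOn_nonneg hA0 _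
        have he2 : 0 ≤ eOn A (m - 2) x := eOn_nonneg hA0 _
        have he0 : 0 ≤ eOn A m x := eOn_nonneg hA0 _
        -- κ r * ∏w ≤ 2·2^n·e(m−1)
        have h4 : κ r * (∏ j ∈ w, x j) ≤ 2 ^ n * (2 * eOn A (m - 1) x) := by
          calc κ r * (∏ j ∈ w, x j) ≤ κ r * eOn A (m - 2) x :=
                mul_le_mul_of_nonneg_left h1 hκr.le
            _ ≤ ((A.powersetCard (m - 2)).card : ℝ) * (2 * eOn A (m - 1) x) := h2
            _ ≤ 2 ^ n * (2 * eOn A (m - 1) x) :=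
                mul_le_mul_of_nonneg_right h2' (by positivity)
        -- κ r * (κ r * ∏w) ≤ 4·4^n·e m
        have h5 : κ r * (κ r * (∏ j ∈ w, x j)) ≤ 4 * 4 ^ n * eOn A m x := by
          have := mul_le_mul_of_nonneg_left h4 hκr.le
          have h6 : κ r * (2 ^ n * (2 * eOn A (m - 1) x)) = 2 ^ n * 2 * (κ r * eOn A (m - 1) x) := by
            ring
          have h7 : κ r * eOn A (m - 1) x ≤ 2 ^ n * (2 * eOn A m x) := by
            calc κ r * eOn A (m - 1) x
                ≤ ((A.powersetCard (m - 1)).card : ℝ) * (2 * eOn A m x) := h3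
              _ ≤ 2 ^ n * (2 * eOn A m x) := mul_le_mul_of_nonneg_right h3' (by positivity)
          calc κ r * (κ r * (∏ j ∈ w, x j)) ≤ 2 ^ n * 2 * (κ r * eOn A (m - 1) x) := by
                nlinarith
            _ ≤ 2 ^ n * 2 * (2 ^ n * (2 * eOn A m x)) := by nlinarith
            _ = 4 * (2 ^ n * 2 ^ n) * eOn A m x := by ring
            _ = 4 * 4 ^ n * eOn A m x := by
                have h44 : (4:ℝ) ^ n = 2 ^ n * 2 ^ n := by
                  rw [← mul_pow]; norm_num
                rw [h44]
        -- −(κ r * T) = (−x r)·(κ r ∏w) ≤ nε κ r · (κ r ∏ w)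
        have h8 : -(κ r * (x r * ∏ j ∈ w, x j)) ≤ (n : ℝ) * ε * (κ r * (κ r * (∏ j ∈ w, x j))) := by
          have hxr' : -(x r) ≤ (n : ℝ) * ε * κ r := by linarith
          have h9 : 0 ≤ κ r * (∏ j ∈ w, x j) := mul_nonneg hκr.le hprodw
          nlinarith [mul_le_mul_of_nonneg_right hxr' h9]
        rw [hprod]
        have h10 : (n : ℝ) * ε * (κ r * (κ r * (∏ j ∈ w, x j))) ≤ 8 * 4 ^ n * Q := by
          calc (n : ℝ) * ε * (κ r * (κ r * (∏ j ∈ w, x j)))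
              ≤ (n : ℝ) * ε * (4 * 4 ^ n * eOn A m x) := mul_le_mul_of_nonneg_left h5 hnε
            _ ≤ (n : ℝ) * ε * (4 * 4 ^ n * (2 * Q)) := by
                have hfac : (0:ℝ) ≤ (n : ℝ) * ε * (4 * 4 ^ n) := mul_nonneg hnε (by positivity)
                nlinarith [mul_le_mul_of_nonneg_left heA hfac]
            _ ≤ 1 * (4 * 4 ^ n * (2 * Q)) := by
                have hfac2 : (0:ℝ) ≤ 4 * 4 ^ n * (2 * Q) :=
                  mul_nonneg (by positivity) (by linarith)
                nlinarith [mul_le_mul_of_nonneg_right hε3 hfac2]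
            _ = 8 * 4 ^ n * Q := by ring
        linarith
    · -- r ∉ s.erase i : the product is nonnegative
      have huA : s.erase i ⊆ A := by
        intro j hj
        refine Finset.mem_erase.mpr ⟨?_, Finset.mem_univ j⟩
        rintro rfl; exact hru hj
      have h0 : 0 ≤ ∏ j ∈ s.erase i, x j := prod_nonneg_of_subset hA0 huA
      have : 0 ≤ κ r * (∏ j ∈ s.erase i, x j) := mul_nonneg hκr.le h0
      nlinarith
  have hc : (0:ℝ) ≤ 8 * 4 ^ n * Q := by positivity
  calc -((n : ℝ) * 2 ^ n * (8 * 4 ^ n) * Q)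
      ≤ ∑ s ∈ (univ : Finset (Fin n)).powersetCard m,
          ∑ i ∈ s.erase r, -(8 * 4 ^ n * Q) := by
        have hsum : ∀ s ∈ (univ : Finset (Fin n)).powersetCard m,
            ((n : ℝ)) * -(8 * 4 ^ n * Q) ≤ ∑ i ∈ s.erase r, -(8 * 4 ^ n * Q) := by
          intro s _
          rw [Finset.sum_const, nsmul_eq_mul]
          have hcard : ((s.erase r).card : ℝ) ≤ (n : ℝ) := by
            have : (s.erase r).card ≤ n := by
              calc (s.erase r).card ≤ s.card := Finset.card_le_card (Finset.erase_subset r s)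
                _ ≤ Fintype.card (Fin n) := Finset.card_le_univ s
                _ = n := Fintype.card_fin n
            exact_mod_cast this
          nlinarith
        calc -((n : ℝ) * 2 ^ n * (8 * 4 ^ n) * Q)
            ≤ (((univ : Finset (Fin n)).powersetCard m).card : ℝ)
                * ((n : ℝ) * -(8 * 4 ^ n * Q)) := by
              have hcard := card_powersetCard_le (univ : Finset (Fin n)) m
              have hfac3 : (0:ℝ) ≤ (n : ℝ) * (8 * 4 ^ n * Q) :=
                mul_nonneg (Nat.cast_nonneg n) (mul_nonneg (by positivity) hQ.le)
              nlinarith [mul_le_mul_of_nonneg_right hcard hfac3]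
          _ = ∑ s ∈ (univ : Finset (Fin n)).powersetCard m, ((n : ℝ) * -(8 * 4 ^ n * Q)) := by
              rw [Finset.sum_const, nsmul_eq_mul]
          _ ≤ _ := Finset.sum_le_sum hsum
    _ ≤ ∑ s ∈ (univ : Finset (Fin n)).powersetCard m,
          ∑ i ∈ s.erase r, κ r * (∏ j ∈ s.erase i, x j) := by
        exact Finset.sum_le_sum fun s hs => Finset.sum_le_sum (hterm s hs)
    _ = κ r * dirDeriv n m κ r := by
        rw [dirDeriv, Finset.mul_sum]
        exact (Finset.sum_congr rfl fun s _ => (Finset.mul_sum _ _ _)).symm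

end Stmt10Aux


set_option maxHeartbeats 4000000 in
/-- Let `n ≥ 3`, `0 ≤ l < k < n`. There are `ε₀ = ε₀(n,k) > 0` and
`C = C(n,k,l) > 0` such that whenever `κ ∈ Γ̃_k` is ordered `κ_1 ≥ ⋯ ≥ κ_n` and for some `r`
one has `κ_r > 0` and `κ_n ≥ −ε₀ κ_r`, then `(∂F/∂κ_r)(κ) · κ_r ≤ C · F(κ)`,
where `F(κ) = σ_k(λ(κ))/σ_l(λ(κ))`. -/
theorem stmt_10 (n k l : ℕ) (hn : 3 ≤ n) (hl : l < k) (hk : k < n) :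
    ∃ ε₀ : ℝ, 0 < ε₀ ∧ ∃ C : ℝ, 0 < C ∧
      ∀ κ ∈ GammaT n k, (∀ i j : Fin n, i ≤ j → κ j ≤ κ i) →
        ∀ r : Fin n, 0 < κ r → -ε₀ * κ r ≤ κ ⟨n - 1, by omega⟩ →
          fderiv ℝ (Fquot n k l) κ (Pi.single r 1) * κ r ≤ C * Fquot n k l κ := by
  classical
  open Finset Stmt10Aux in
  have hn0 : (0:ℝ) < (n : ℝ) := by exact_mod_cast (by omega : 0 < n)
  have h2pos : (0:ℝ) < 2 ^ n := by positivity
  have h4pos : (0:ℝ) < 4 ^ n := by positivity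
  have h24 : (2:ℝ) ^ n ≤ 4 ^ n := pow_le_pow_left₀ (by norm_num) (by norm_num) n
  have h41 : (1:ℝ) ≤ 4 ^ n := by
    have := pow_le_pow_left₀ (by norm_num : (0:ℝ) ≤ 1) (by norm_num : (1:ℝ) ≤ 4) n
    simpa using this
  refine ⟨1 / (4 * (n : ℝ) * 4 ^ n), by positivity, ?_⟩
  set ε : ℝ := 1 / (4 * (n : ℝ) * 4 ^ n) with hεdef
  have hε0 : 0 ≤ ε := by positivity
  have hε2 : (n : ℝ) * ε * (2 * 2 ^ n) ≤ 1 / 2 := by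
    have he : (n : ℝ) * ε * (2 * 2 ^ n) = 2 ^ n / (2 * 4 ^ n) := by
      rw [hεdef]; field_simp; ring
    rw [he, div_le_div_iff₀ (by positivity) (by norm_num)]
    nlinarith
  have hε3 : (n : ℝ) * ε ≤ 1 := by
    have he : (n : ℝ) * ε = 1 / (4 * 4 ^ n) := by
      rw [hεdef]; field_simp
    rw [he, div_le_one (by positivity)]
    nlinarith [h41]
  set C1 : ℝ := (n : ℝ) * 2 ^ n * (4 * 2 ^ n) with hC1def
  set C2 : ℝ := (n : ℝ) * 2 ^ n * (8 * 4 ^ n) with hC2def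
  refine ⟨C1 + C2, by positivity, ?_⟩
  intro κ hκ hord r hκr hlast
  -- basic facts
  have hk1 : 1 ≤ k := by omega
  set x := lamEta n κ with hxdef
  have hκlow : ∀ j : Fin n, -(ε * κ r) ≤ κ j := by
    intro j
    have hj : j ≤ (⟨n - 1, by omega⟩ : Fin n) := by
      rw [Fin.le_def]
      exact Nat.le_of_lt_succ (by simpa [Nat.sub_add_cancel (by omega : 1 ≤ n)] using j.isLt)
    have := hord j ⟨n - 1, by omega⟩ hj
    calc -(ε * κ r) = -ε * κ r := by ring
      _ ≤ κ ⟨n - 1, by omega⟩ := hlast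
      _ ≤ κ j := this
  have hx : ∀ i ∈ univ.erase r, κ r / 2 ≤ x i := by
    intro i hi
    have hir : i ≠ r := Finset.ne_of_mem_erase hi
    have hrmem : r ∈ univ.erase i := Finset.mem_erase.mpr ⟨fun h => hir h.symm, Finset.mem_univ r⟩
    have hsum : x i = κ r + ∑ j ∈ (univ.erase i).erase r, κ j := by
      rw [hxdef]
      exact (Finset.add_sum_erase _ κ hrmem).symm
    have hcard : ((univ.erase i).erase r).card = n - 2 := by
      rw [Finset.card_erase_of_mem hrmem, cardA]
      omega
    have htail : (((univ.erase i).erase r).card) • (-(ε * κ r))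
        ≤ ∑ j ∈ (univ.erase i).erase r, κ j :=
      Finset.card_nsmul_le_sum _ _ _ (fun j _ => hκlow j)
    rw [hcard, nsmul_eq_mul] at htail
    have hcast : ((n - 2 : ℕ) : ℝ) ≤ (n : ℝ) := by
      exact_mod_cast Nat.cast_le.mpr (Nat.sub_le n 2)
    have hnn : (0:ℝ) ≤ ((n - 2 : ℕ) : ℝ) := Nat.cast_nonneg _
    have h5 : ((n - 2 : ℕ) : ℝ) * (ε * κ r) ≤ (n : ℝ) * (ε * κ r) :=
      mul_le_mul_of_nonneg_right hcast (by positivity)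
    have hε4 : (n : ℝ) * ε ≤ 1 / 2 := by
      have he : (n : ℝ) * ε = 1 / (4 * 4 ^ n) := by
        rw [hεdef]; field_simp
      rw [he, div_le_div_iff₀ (by positivity) (by norm_num)]
      nlinarith [h41]
    have h6 : (n : ℝ) * ε * κ r ≤ κ r / 2 := by
      nlinarith [mul_le_mul_of_nonneg_right hε4 hκr.le]
    rw [hsum]
    nlinarith
  have hxr : -((n : ℝ) * ε * κ r) ≤ x r := by
    have hsum : x r = ∑ j ∈ univ.erase r, κ j := rfl
    have htail : ((univ.erase r).card) • (-(ε * κ r)) ≤ ∑ j ∈ univ.erase r, κ j :=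
      Finset.card_nsmul_le_sum _ _ _ (fun j _ => hκlow j)
    rw [cardA, nsmul_eq_mul] at htail
    have hcast : ((n - 1 : ℕ) : ℝ) ≤ (n : ℝ) := by
      exact_mod_cast Nat.cast_le.mpr (Nat.sub_le n 1)
    have hnn : (0:ℝ) ≤ ((n - 1 : ℕ) : ℝ) := Nat.cast_nonneg _
    have h5 : ((n - 1 : ℕ) : ℝ) * (ε * κ r) ≤ (n : ℝ) * (ε * κ r) :=
      mul_le_mul_of_nonneg_right hcast (by positivity)
    rw [hsum]
    nlinarith
  -- positivity of P and Q
  have hP : 0 < esymm n k x := hκ k hk1 le_rfl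
  have hQ : 0 < esymm n l x := by
    rcases Nat.eq_zero_or_pos l with hl0 | hl1
    · subst hl0
      have : esymm n 0 x = 1 := by simp [esymm]
      rw [this]; norm_num
    · exact hκ l hl1 (by omega)
  have hQne : esymm n l x ≠ 0 := ne_of_gt hQ
  -- the two key bounds
  have h1 : κ r * dirDeriv n k κ r ≤ C1 * esymm n k x :=
    key_ub hn hk1 hk hκr hε2 hx hxr hP
  have h2 : -(C2 * esymm n l x) ≤ κ r * dirDeriv n l κ r := by
    rcases Nat.eq_zero_or_pos l with hl0 | hl1
    · subst hl0
      have hdd : dirDeriv n 0 κ r = 0 := by simp [dirDeriv]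
      rw [hdd, mul_zero]
      have : 0 ≤ C2 * esymm n 0 x := by positivity
      linarith
    · exact key_lb hn hl1 (by omega) hκr hε2 hε3 hε0 hx hxr hQ
  -- derivative formula
  have hfd := fderiv_Fquot_single (n := n) (k := k) (l := l) (κ := κ) r hQne
  rw [hfd]
  rw [Fquot]
  set P := esymm n k x with hPdef
  set Q := esymm n l x with hQdef
  set Nd := dirDeriv n k κ r with hNdef
  set Dd := dirDeriv n l κ r with hDdef
  have hQ2 : (0:ℝ) < Q ^ 2 := by positivity
  have key : Nd * κ r * Q - P * (Dd * κ r) ≤ (C1 + C2) * P * Q := by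
    have ha := mul_le_mul_of_nonneg_right h1 hQ.le
    have hb := mul_le_mul_of_nonneg_left h2 hP.le
    nlinarith
  have lhs_eq : (Nd * Q⁻¹ - P * Dd * (Q ^ 2)⁻¹) * κ r
      = (Nd * κ r * Q - P * (Dd * κ r)) / Q ^ 2 := by
    field_simp
  have rhs_eq : (C1 + C2) * (P / Q) = ((C1 + C2) * P * Q) / Q ^ 2 := by
    field_simp
  rw [lhs_eq, rhs_eq]
  gcongr
end
end

section
/- (Lemma 4.2: derivative of the operator in the gradient variable) Let 0 ≤ l < k ≤ n. For a symmetric n×n matrix r and p ∈ ℝⁿ with |p| < 1, set w = √(1 − |p|²), γ^{ik} = δ_{ik} + p_i p_k/(w(1+w)), A(r,p) = (1/w) γ r γ with entries a_{ij}, and G(r,p) = f(λ(A(r,p))) where f(κ) = σ_k(λ(κ))/σ_l(λ(κ)) and λ(A) denotes the eigenvalue vector of A. Then at every (r,p) with λ(A(r,p)) ∈ Γ̃_k, G is differentiable in p and ∂G/∂p_s = (p_s/w²) Σ_i f_i κ_i + (2/(w(1+w))) Σ_{i,j,t} F^{ij} a_{it} (w p_t γ^{sj} + p_j γ^{ts}),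 where κ = λ(A(r,p)), f_i = ∂f/∂κ_i(κ), and F^{ij} = ∂ f(λ(A))/∂a_{ij} evaluated at A(r,p). -/
noncomputable section

/-- Euclidean `n`-space `ℝⁿ`. -/
abbrev En (n : ℕ) := EuclideanSpace ℝ (Fin n)

/-- The partial derivative `u_i = ∂u/∂x_i` at `x`. -/
def pdu (n : ℕ) (u : En n → ℝ) (x : En n) (i : Fin n) : ℝ :=
  fderiv ℝ u x (EuclideanSpace.single i 1)

/-- The Hessian matrix `D²u = (u_{ij})` at `x`. -/
def hessM (n : ℕ) (u : En n → ℝ) (x : En n) : Matrix (Fin n) (Fin n) ℝ :=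
  Matrix.of fun i j => fderiv ℝ (fun y => pdu n u y j) x (EuclideanSpace.single i 1)

/-- `|Du|²` at `x`. -/
def gradSq (n : ℕ) (u : En n → ℝ) (x : En n) : ℝ := ∑ i, (pdu n u x i) ^ 2

/-- `w = √(1 − |Du|²)` at `x`. -/
def wfun (n : ℕ) (u : En n → ℝ) (x : En n) : ℝ := Real.sqrt (1 - gradSq n u x)

/-- The matrix `γ`, `γ^{ik} = δ_{ik} + u_i u_k/(w(1+w))`, at `x`. -/
def gammaM (n : ℕ) (u : En n → ℝ) (x : En n) : Matrix (Fin n) (Fin n) ℝ :=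
  Matrix.of fun i j => (if i = j then (1 : ℝ) else 0) +
    pdu n u x i * pdu n u x j / (wfun n u x * (1 + wfun n u x))

/-- The matrix `A[u] = (1/w) γ D²u γ` at `x`, whose eigenvalues are the principal
curvatures `κ[u](x)` of the graph of `u`. -/
def Amat (n : ℕ) (u : En n → ℝ) (x : En n) : Matrix (Fin n) (Fin n) ℝ :=
  (wfun n u x)⁻¹ • (gammaM n u x * hessM n u x * gammaM n u x)

/-- `κ` is the eigenvalue vector (with multiplicity) of the matrix `A`. -/
def IsEigs (n : ℕ) (A : Matrix (Fin n) (Fin n) ℝ) (κ : Fin n → ℝ) : Prop :=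
  A.charpoly = ∏ i, (Polynomial.X - Polynomial.C (κ i))

/-- `u` is spacelike on `s`: `sup_s |Du| < 1`. -/
def SpacelikeOn (n : ℕ) (u : En n → ℝ) (s : Set (En n)) : Prop :=
  ∃ θ : ℝ, 0 < θ ∧ θ < 1 ∧ ∀ x ∈ s, Real.sqrt (gradSq n u x) ≤ 1 - θ

/-- `u` is an admissible solution of `F(κ[u]) = ψ(x,u)` on `Ω`:
at each point the principal curvature vector `κ[u]` lies in `Γ̃_k` and the equation holds. -/
def AdmSolution (n k l : ℕ) (Ω : Set (En n)) (u : En n → ℝ) (ψ : En n → ℝ → ℝ) : Prop :=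
  ∀ x ∈ Ω, ∃ κ : Fin n → ℝ, IsEigs n (Amat n u x) κ ∧ κ ∈ GammaT n k ∧
    Fquot n k l κ = ψ x (u x)

/-- `u` is an admissible subsolution: `F(κ[u]) ≥ ψ(x,u)` on `Ω`. -/
def AdmSubsolution (n k l : ℕ) (Ω : Set (En n)) (u : En n → ℝ) (ψ : En n → ℝ → ℝ) : Prop :=
  ∀ x ∈ Ω, ∃ κ : Fin n → ℝ, IsEigs n (Amat n u x) κ ∧ κ ∈ GammaT n k ∧
    ψ x (u x) ≤ Fquot n k l κ

/-- `u` is an admissible supersolution: `F(κ[u]) ≤ ψ(x,u)` on `Ω`. -/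
def AdmSupersolution (n k l : ℕ) (Ω : Set (En n)) (u : En n → ℝ) (ψ : En n → ℝ → ℝ) : Prop :=
  ∀ x ∈ Ω, ∃ κ : Fin n → ℝ, IsEigs n (Amat n u x) κ ∧ κ ∈ GammaT n k ∧
    Fquot n k l κ ≤ ψ x (u x)

/-- `σ_m` of the eigenvalue vector of a matrix `B`, expressed through the characteristic
polynomial: `σ_m(eigenvalues of B) = (−1)^m · coeff_{n−m}(charpoly B)`. -/
def sigmaMat (n m : ℕ) (B : Matrix (Fin n) (Fin n) ℝ) : ℝ :=
  (-1 : ℝ) ^ m * B.charpoly.coeff (n - m)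

/-- `f(λ(A)) = σ_k(λ(κ(A)))/σ_l(λ(κ(A)))` as a function of the matrix entries `a = (a_{ij})`,
where `κ(A)` is the eigenvalue vector of `A` and `λ(κ)_i = Σ_{j≠i} κ_j`; equivalently the
quotient of the `σ`'s of the matrix `B = (tr A)·I − A`, whose eigenvalues are `λ(κ(A))`. -/
def fMat (n k l : ℕ) (a : Fin n → Fin n → ℝ) : ℝ :=
  sigmaMat n k ((Matrix.of a).trace • (1 : Matrix (Fin n) (Fin n) ℝ) - Matrix.of a) /
    sigmaMat n l ((Matrix.of a).trace • (1 : Matrix (Fin n) (Fin n) ℝ) - Matrix.of a)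

/-- The standard basis direction in matrix space: `(dirM i j)_{ab} = δ_{ai} δ_{bj}`. -/
def dirM (n : ℕ) (i j : Fin n) : Fin n → Fin n → ℝ :=
  fun a b => if a = i ∧ b = j then 1 else 0

/-- `w = √(1 − |p|²)`. -/
def wP (n : ℕ) (p : Fin n → ℝ) : ℝ := Real.sqrt (1 - ∑ i, (p i) ^ 2)

/-- The matrix `γ(p)`, `γ^{ik} = δ_{ik} + p_i p_k/(w(1+w))`. -/
def gammaP (n : ℕ) (p : Fin n → ℝ) : Matrix (Fin n) (Fin n) ℝ :=
  Matrix.of fun i j => (if i = j then (1 : ℝ) else 0) + p i * p j / (wP n p * (1 + wP n p))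

/-- `A(r,p) = (1/w) γ(p) r γ(p)`. -/
def AmatP (n : ℕ) (r : Fin n → Fin n → ℝ) (p : Fin n → ℝ) : Matrix (Fin n) (Fin n) ℝ :=
  (wP n p)⁻¹ • (gammaP n p * Matrix.of r * gammaP n p)

/-- The operator `G(r,p) = f(λ(A(r,p)))`. -/
def Gop (n k l : ℕ) (r : Fin n → Fin n → ℝ) (p : Fin n → ℝ) : ℝ :=
  fMat n k l (fun i j => AmatP n r p i j)

open Polynomial Matrix

lemma vieta_coeff (n m : ℕ) (hm : m ≤ n) (μ : Fin n → ℝ) :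
    (∏ i, (X - C (μ i))).coeff (n - m) = (-1 : ℝ) ^ m * esymm n m μ := by
  have hcard : (Finset.univ.val.map μ).card = n := by simp
  have h1 : (∏ i, (X - C (μ i))) = ((Finset.univ.val.map μ).map fun t => X - C t).prod := by
    rw [Multiset.map_map]; rfl
  rw [h1, Multiset.prod_X_sub_C_coeff _ (by rw [hcard]; omega), hcard,
    Nat.sub_sub_self hm, Finset.esymm_map_val]
  rfl

lemma charmatrix_shift (n : ℕ) (A : Matrix (Fin n) (Fin n) ℝ) (c : ℝ) :
    charmatrix (c • (1 : Matrix (Fin n) (Fin n) ℝ) - A)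
      = (-1 : ℝ[X]) • (charmatrix A).map (eval₂RingHom C (C c - X) : ℝ[X] →+* ℝ[X]) := by
  ext i j
  by_cases h : i = j
  · subst h
    simp [charmatrix_apply_eq, Matrix.map_apply, Matrix.sub_apply, Matrix.smul_apply,
      Matrix.one_apply, map_sub, C_sub]
    ring
  · simp [charmatrix_apply_ne _ _ _ h, Matrix.map_apply, Matrix.sub_apply, Matrix.smul_apply,
      Matrix.one_apply_ne h, map_sub, h]

lemma charpoly_shift (n : ℕ) (A : Matrix (Fin n) (Fin n) ℝ) (c : ℝ) (κ : Fin n → ℝ)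
    (h : A.charpoly = ∏ i, (X - C (κ i))) :
    (c • (1 : Matrix (Fin n) (Fin n) ℝ) - A).charpoly = ∏ i, (X - C (c - κ i)) := by
  have hd : ((charmatrix A).map (eval₂RingHom C (C c - X) : ℝ[X] →+* ℝ[X])).det
      = ∏ i, ((C c - X) - C (κ i)) := by
    rw [← RingHom.mapMatrix_apply, ← RingHom.map_det]
    have : (charmatrix A).det = A.charpoly := rfl
    rw [this, h, map_prod]
    simp
  rw [Matrix.charpoly, charmatrix_shift, Matrix.det_smul, hd]
  rw [Finset.prod_congr rfl (fun i _ => show (X - C (c - κ i)) = (-1) * ((C c - X) - C (κ i)) by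
    rw [C_sub]; ring)]
  rw [Finset.prod_mul_distrib, Finset.prod_const]
  simp [Fintype.card_fin]

lemma coeff_comp_C_mul_X (p : ℝ[X]) (b : ℝ) (j : ℕ) :
    (p.comp (C b * X)).coeff j = b ^ j * p.coeff j := by
  induction p using Polynomial.induction_on' with
  | add p q hp hq => simp [add_comp, hp, hq, mul_add]
  | monomial k a =>
    rw [monomial_comp]
    rw [mul_pow, ← C_pow, ← mul_assoc, ← C_mul]
    rw [coeff_C_mul, coeff_X_pow, coeff_monomial]
    by_cases h : j = k
    · subst h; simp; ring
    · simp [h, Ne.symm h]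

lemma charmatrix_smul' (n : ℕ) (B : Matrix (Fin n) (Fin n) ℝ) (c : ℝ) (hc : c ≠ 0) :
    charmatrix (c • B)
      = (C c) • (charmatrix B).map (eval₂RingHom C (C c⁻¹ * X) : ℝ[X] →+* ℝ[X]) := by
  refine Matrix.ext fun i j => ?_
  by_cases h : i = j
  · subst h
    show charmatrix (c • B) i i = C c * eval₂ C (C c⁻¹ * X) (charmatrix B i i)
    rw [charmatrix_apply_eq, charmatrix_apply_eq, Matrix.smul_apply, smul_eq_mul,
      eval₂_sub, eval₂_X, eval₂_C, mul_sub, ← mul_assoc, ← C_mul, mul_inv_cancel₀ hc,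
      C_1, one_mul, ← C_mul]
  · show charmatrix (c • B) i j = C c * eval₂ C (C c⁻¹ * X) (charmatrix B i j)
    rw [charmatrix_apply_ne _ _ _ h, charmatrix_apply_ne _ _ _ h, Matrix.smul_apply,
      smul_eq_mul, eval₂_neg, eval₂_C, mul_neg, ← C_mul]

lemma charpoly_smul_coeff (n m : ℕ) (hm : m ≤ n) (B : Matrix (Fin n) (Fin n) ℝ)
    (c : ℝ) (hc : c ≠ 0) :
    (c • B).charpoly.coeff (n - m) = c ^ m * B.charpoly.coeff (n - m) := by
  have hd : ((charmatrix B).map (eval₂RingHom C (C c⁻¹ * X) : ℝ[X] →+* ℝ[X])).det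
      = B.charpoly.comp (C c⁻¹ * X) := by
    rw [← RingHom.mapMatrix_apply, ← RingHom.map_det]
    rfl
  rw [Matrix.charpoly, charmatrix_smul' n B c hc, Matrix.det_smul, hd]
  rw [← C_pow, coeff_C_mul, coeff_comp_C_mul_X, Fintype.card_fin, ← mul_assoc]
  have h2 : c ^ n * (c⁻¹) ^ (n - m) = c ^ m := by
    have h3 : c ^ n = c ^ m * c ^ (n - m) := by rw [← pow_add]; congr 1; omega
    rw [h3, mul_assoc, ← mul_pow, mul_inv_cancel₀ hc, one_pow, mul_one]
  rw [h2]

section DiffCoeff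

variable {E : Type*} [NormedAddCommGroup E] [NormedSpace ℝ E]

lemma differentiable_coeff_prod {ι : Type*} (s : Finset ι) (P : ι → E → ℝ[X])
    (h : ∀ i ∈ s, ∀ j, Differentiable ℝ fun a => (P i a).coeff j) :
    ∀ j, Differentiable ℝ fun a => (∏ i ∈ s, P i a).coeff j := by
  induction s using Finset.cons_induction with
  | empty => intro j; simp only [Finset.prod_empty, coeff_one]; exact differentiable_const _
  | cons i s his ih =>
    intro j
    simp only [Finset.prod_cons, coeff_mul]
    exact Differentiable.fun_sum fun x _ =>
      ((h i (Finset.mem_cons_self i s) x.1).mul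
        (ih (fun i' hi' j' => h i' (Finset.mem_cons_of_mem hi') j') x.2))

lemma differentiable_charpoly_coeff {n : ℕ} (M : E → Matrix (Fin n) (Fin n) ℝ)
    (hM : ∀ i j, Differentiable ℝ fun a => M a i j) (m : ℕ) :
    Differentiable ℝ fun a => (M a).charpoly.coeff m := by
  have key : ∀ a, (M a).charpoly.coeff m
      = ∑ σ : Equiv.Perm (Fin n), (Equiv.Perm.sign σ : ℤ) •
          (∏ i, charmatrix (M a) (σ i) i).coeff m := by
    intro a
    rw [Matrix.charpoly, Matrix.det_apply, Polynomial.finset_sum_coeff]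
    refine Finset.sum_congr rfl fun σ _ => ?_
    rw [Polynomial.coeff_smul]
    rfl
  simp only [key]
  refine Differentiable.fun_sum fun σ _ => Differentiable.fun_const_smul ?_ _
  refine differentiable_coeff_prod Finset.univ _ (fun i _ j => ?_) m
  have hent : ∀ a, charmatrix (M a) (σ i) i
      = (if σ i = i then (X : ℝ[X]) else 0) - C (M a (σ i) i) := by
    intro a
    by_cases h : σ i = i
    · rw [if_pos h, h, charmatrix_apply_eq]
    · rw [if_neg h, charmatrix_apply_ne _ _ _ h, zero_sub]
  simp only [hent, coeff_sub, coeff_C]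
  refine Differentiable.sub (differentiable_const _) ?_
  by_cases hj : j = 0
  · simp only [hj, if_pos rfl]
    exact hM (σ i) i
  · simp only [if_neg hj]
    exact differentiable_const _

end DiffCoeff

lemma esymm_one' (n : ℕ) (κ : Fin n → ℝ) : esymm n 1 κ = ∑ i, κ i := by
  unfold esymm
  rw [Finset.powersetCard_one, Finset.sum_map]
  simp

lemma sigmaMat_eq (n : ℕ) (hn : 0 < n) (A : Matrix (Fin n) (Fin n) ℝ) (κ : Fin n → ℝ)
    (h : A.charpoly = ∏ i, (X - C (κ i))) (m : ℕ) (hm : m ≤ n) :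
    sigmaMat n m (A.trace • (1 : Matrix (Fin n) (Fin n) ℝ) - A) = esymm n m (lamEta n κ) := by
  have : Nonempty (Fin n) := ⟨⟨0, hn⟩⟩
  have htr : A.trace = ∑ i, κ i := by
    rw [Matrix.trace_eq_neg_charpoly_coeff, h, Fintype.card_fin,
      vieta_coeff n 1 (by omega), esymm_one' n κ]
    ring
  have hlam : ∀ i, lamEta n κ i = A.trace - κ i := by
    intro i
    rw [htr, lamEta, Finset.sum_erase_eq_sub (Finset.mem_univ i)]
  have hB := charpoly_shift n A A.trace κ h
  unfold sigmaMat
  rw [hB]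
  rw [Finset.prod_congr rfl (fun i _ => by rw [← hlam i])]
  rw [vieta_coeff n m hm, ← mul_assoc, ← mul_pow]
  norm_num

lemma sigmaMat_smul (n m : ℕ) (hm : m ≤ n) (B : Matrix (Fin n) (Fin n) ℝ) (c : ℝ)
    (hc : c ≠ 0) : sigmaMat n m (c • B) = c ^ m * sigmaMat n m B := by
  unfold sigmaMat
  rw [charpoly_smul_coeff n m hm B c hc]
  ring

lemma fMat_smul (n k l : ℕ) (hl : l ≤ k) (hk : k ≤ n) (a : Fin n → Fin n → ℝ) (c : ℝ)
    (hc : c ≠ 0) : fMat n k l (c • a) = c ^ (k - l) * fMat n k l a := by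
  have hB : (Matrix.of (c • a)).trace • (1 : Matrix (Fin n) (Fin n) ℝ) - Matrix.of (c • a)
      = c • ((Matrix.of a).trace • (1 : Matrix (Fin n) (Fin n) ℝ) - Matrix.of a) := by
    have h1 : Matrix.of (c • a) = c • Matrix.of a := rfl
    rw [h1, Matrix.trace_smul, smul_sub, smul_smul, smul_eq_mul]
  unfold fMat
  rw [hB, sigmaMat_smul n k hk _ c hc, sigmaMat_smul n l (le_trans hl hk) _ c hc]
  have h3 : c ^ k = c ^ (k - l) * c ^ l := by rw [← pow_add]; congr 1; omega
  rw [h3, mul_assoc, mul_div_assoc, mul_div_mul_left _ _ (pow_ne_zero l hc), ← mul_div_assoc]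

lemma esymm_smul (n m : ℕ) (x : Fin n → ℝ) (c : ℝ) :
    esymm n m (c • x) = c ^ m * esymm n m x := by
  unfold esymm
  rw [Finset.mul_sum]
  refine Finset.sum_congr rfl fun s hs => ?_
  have hcard : s.card = m := (Finset.mem_powersetCard.mp hs).2
  rw [← hcard, ← Finset.prod_const, ← Finset.prod_mul_distrib]
  rfl

lemma lamEta_smul (n : ℕ) (κ : Fin n → ℝ) (c : ℝ) :
    lamEta n (c • κ) = c • lamEta n κ := by
  funext i
  show ∑ j ∈ Finset.univ.erase i, c * κ j = c * ∑ j ∈ Finset.univ.erase i, κ j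
  rw [Finset.mul_sum]

lemma Fquot_smul (n k l : ℕ) (hl : l ≤ k) (κ : Fin n → ℝ) (c : ℝ) (hc : c ≠ 0) :
    Fquot n k l (c • κ) = c ^ (k - l) * Fquot n k l κ := by
  unfold Fquot
  rw [lamEta_smul, esymm_smul, esymm_smul]
  have h3 : c ^ k = c ^ (k - l) * c ^ l := by rw [← pow_add]; congr 1; omega
  rw [h3, mul_assoc, mul_div_assoc, mul_div_mul_left _ _ (pow_ne_zero l hc), ← mul_div_assoc]

lemma euler_fderiv {E : Type*} [NormedAddCommGroup E] [NormedSpace ℝ E]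
    (g : E → ℝ) (x : E) (d : ℕ) (hg : DifferentiableAt ℝ g x)
    (hs : ∀ c : ℝ, c ≠ 0 → g (c • x) = c ^ d * g x) :
    fderiv ℝ g x x = d * g x := by
  have hline : HasDerivAt (fun c : ℝ => c • x) x 1 := by
    simpa using (hasDerivAt_id (1 : ℝ)).smul_const x
  have h1 : HasDerivAt (fun c : ℝ => g (c • x)) (fderiv ℝ g x x) 1 := by
    have hg' : HasFDerivAt g (fderiv ℝ g x) ((fun c : ℝ => c • x) 1) := by
      simpa using hg.hasFDerivAt
    exact hg'.comp_hasDerivAt 1 hline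
  have h2 : HasDerivAt (fun c : ℝ => c ^ d * g x) ((d * 1 ^ (d - 1)) * g x) 1 :=
    (hasDerivAt_pow d 1).mul_const (g x)
  have heq : (fun c : ℝ => g (c • x)) =ᶠ[nhds 1] fun c => c ^ d * g x := by
    have hmem : {c : ℝ | c ≠ 0} ∈ nhds (1 : ℝ) := isOpen_ne.mem_nhds (by norm_num)
    filter_upwards [hmem] with c hc using hs c hc
  have h2' : HasDerivAt (fun c : ℝ => g (c • x)) ((d * 1 ^ (d - 1)) * g x) 1 :=
    h2.congr_of_eventuallyEq heq
  have := h1.unique h2'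
  simpa using this

lemma vec_eq_sum (n : ℕ) (v : Fin n → ℝ) :
    v = ∑ i, v i • (Pi.single i 1 : Fin n → ℝ) := by
  funext j
  rw [Finset.sum_apply]
  simp [Pi.single_apply]

lemma clm_vec (n : ℕ) (L : (Fin n → ℝ) →L[ℝ] ℝ) (v : Fin n → ℝ) :
    L v = ∑ i, v i * L (Pi.single i 1) := by
  conv_lhs => rw [vec_eq_sum n v]
  rw [map_sum]
  simp

lemma mat_eq_sum (n : ℕ) (M : Fin n → Fin n → ℝ) : M = ∑ i, ∑ j, M i j • dirM n i j := by
  funext a b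
  rw [Finset.sum_apply, Finset.sum_apply]
  have h1 : ∀ i, (∑ j, M i j • dirM n i j) a b = if a = i then M a b else 0 := by
    intro i
    rw [Finset.sum_apply, Finset.sum_apply]
    by_cases h : a = i
    · subst h
      simp [dirM, Pi.smul_apply]
    · simp [dirM, Pi.smul_apply, h]
  have h2 : ∀ i, (∑ j, M i j • dirM n i j) a b = ((fun i => if a = i then M a b else 0) i) := h1
  rw [Finset.sum_congr rfl fun i _ => h2 i]
  simp

lemma clm_mat (n : ℕ) (L : (Fin n → Fin n → ℝ) →L[ℝ] ℝ) (M : Fin n → Fin n → ℝ) :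
    L M = ∑ i, ∑ j, M i j * L (dirM n i j) := by
  conv_lhs => rw [mat_eq_sum n M]
  rw [map_sum]
  refine Finset.sum_congr rfl fun i _ => ?_
  rw [map_sum]
  simp

lemma charpoly_transpose' (n : ℕ) (M : Matrix (Fin n) (Fin n) ℝ) :
    Mᵀ.charpoly = M.charpoly := by
  unfold Matrix.charpoly
  have h : charmatrix Mᵀ = (charmatrix M)ᵀ := by
    refine Matrix.ext fun i j => ?_
    by_cases h : i = j
    · subst h
      simp [charmatrix_apply_eq, Matrix.transpose_apply]
    · simp [Matrix.transpose_apply, charmatrix_apply_ne _ _ _ h,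
        charmatrix_apply_ne _ _ _ (Ne.symm h)]
  rw [h, Matrix.det_transpose]

lemma fMat_transpose (n k l : ℕ) (a : Fin n → Fin n → ℝ) :
    fMat n k l (fun i j => a j i) = fMat n k l a := by
  have h1 : Matrix.of (fun i j => a j i) = (Matrix.of a)ᵀ := rfl
  have h2 : (Matrix.of a)ᵀ.trace • (1 : Matrix (Fin n) (Fin n) ℝ) - (Matrix.of a)ᵀ
      = ((Matrix.of a).trace • (1 : Matrix (Fin n) (Fin n) ℝ) - Matrix.of a)ᵀ := by
    rw [Matrix.trace_transpose, Matrix.transpose_sub, Matrix.transpose_smul,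
      Matrix.transpose_one]
  unfold fMat sigmaMat
  rw [h1, h2, charpoly_transpose']

lemma differentiable_sigB (n m : ℕ) :
    Differentiable ℝ (fun a : Fin n → Fin n → ℝ =>
      sigmaMat n m ((Matrix.of a).trace • (1 : Matrix (Fin n) (Fin n) ℝ) - Matrix.of a)) := by
  unfold sigmaMat
  apply Differentiable.const_mul
  apply differentiable_charpoly_coeff
  intro i j
  have hent : ∀ a : Fin n → Fin n → ℝ,
      ((Matrix.of a).trace • (1 : Matrix (Fin n) (Fin n) ℝ) - Matrix.of a) i j
        = (∑ x, a x x) * (if i = j then 1 else 0) - a i j := by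
    intro a
    simp [Matrix.trace, Matrix.sub_apply, Matrix.smul_apply, Matrix.one_apply, Matrix.diag,
      smul_eq_mul, mul_ite]
  simp only [hent]
  have hentry : ∀ (x y : Fin n), Differentiable ℝ (fun a : Fin n → Fin n → ℝ => a x y) :=
    fun x y => by fun_prop
  exact ((Differentiable.fun_sum fun x _ => hentry x x).mul (differentiable_const _)).sub
    (hentry i j)

lemma diffAt_div {E : Type*} [NormedAddCommGroup E] [NormedSpace ℝ E] (f g : E → ℝ) (x : E)
    (hf : DifferentiableAt ℝ f x) (hg : DifferentiableAt ℝ g x) (h0 : g x ≠ 0) :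
    DifferentiableAt ℝ (fun a => f a / g a) x := by
  simp only [div_eq_mul_inv]
  exact hf.mul (hg.inv h0)

lemma differentiableAt_fMat (n k l : ℕ) (a₀ : Fin n → Fin n → ℝ)
    (hden : sigmaMat n l ((Matrix.of a₀).trace • (1 : Matrix (Fin n) (Fin n) ℝ) - Matrix.of a₀)
      ≠ 0) : DifferentiableAt ℝ (fMat n k l) a₀ := by
  exact diffAt_div _ _ _ ((differentiable_sigB n k) a₀) ((differentiable_sigB n l) a₀) hden

lemma differentiable_finset_prod {E : Type*} [NormedAddCommGroup E] [NormedSpace ℝ E]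
    {ι : Type*} (s : Finset ι) (f : ι → E → ℝ) (h : ∀ i ∈ s, Differentiable ℝ (f i)) :
    Differentiable ℝ (fun a => ∏ i ∈ s, f i a) := by
  induction s using Finset.cons_induction with
  | empty => simpa using differentiable_const (1 : ℝ)
  | cons i s his ih =>
    simp only [Finset.prod_cons]
    exact (h i (Finset.mem_cons_self i s)).mul (ih fun i' hi' => h i' (Finset.mem_cons_of_mem hi'))

lemma differentiable_esymm_lam (n m : ℕ) :
    Differentiable ℝ (fun κ : Fin n → ℝ => esymm n m (lamEta n κ)) := by
  unfold esymm lamEta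
  refine Differentiable.fun_sum fun s _ => ?_
  refine differentiable_finset_prod s _ fun i _ => ?_
  exact Differentiable.fun_sum fun j _ => differentiable_apply j

lemma differentiableAt_Fquot (n k l : ℕ) (κ : Fin n → ℝ)
    (hden : esymm n l (lamEta n κ) ≠ 0) : DifferentiableAt ℝ (Fquot n k l) κ := by
  exact diffAt_div _ _ _ ((differentiable_esymm_lam n k) κ) ((differentiable_esymm_lam n l) κ)
    hden

def Nm (n : ℕ) (p : Fin n → ℝ) (s : Fin n) : Fin n → Fin n → ℝ :=
  fun t j => (wP n p * p t * gammaP n p s j + p j * gammaP n p t s) / (wP n p * (1 + wP n p))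

def Gd (n : ℕ) (p : Fin n → ℝ) (s : Fin n) : Fin n → Fin n → ℝ :=
  fun a b => ((Pi.single s 1 : Fin n → ℝ) a * p b + p a * (Pi.single s 1 : Fin n → ℝ) b)
      / (wP n p * (1 + wP n p))
    + p a * p b * (p s * (1 + 2 * wP n p) / (wP n p ^ 3 * (1 + wP n p) ^ 2))

set_option maxHeartbeats 1000000 in

lemma key_sum (n : ℕ) (p : Fin n → ℝ) (s : Fin n) (hw : 0 < wP n p)
    (hpw : ∑ x, p x ^ 2 = 1 - wP n p ^ 2) (a b : Fin n) :
    ∑ x, gammaP n p a x * Nm n p s x b = Gd n p s a b := by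
  set w := wP n p with hwdef
  have hw0 : w ≠ 0 := ne_of_gt hw
  have h1w : (1 : ℝ) + w ≠ 0 := by positivity
  have hsum2 : ∑ x, p x * gammaP n p x s = p s / w := by
    have hterm : ∀ x, p x * gammaP n p x s
        = (if x = s then p x else 0) + p x ^ 2 * (p s / (w * (1 + w))) := by
      intro x
      by_cases hx : x = s
      · subst hx; simp [gammaP]; ring
      · simp only [gammaP, Matrix.of_apply, if_neg hx]; ring
    rw [Finset.sum_congr rfl fun x _ => hterm x, Finset.sum_add_distrib,
      Finset.sum_ite_eq' Finset.univ s p, ← Finset.sum_mul, hpw]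
    simp only [Finset.mem_univ, if_pos]
    field_simp
    ring
  have hexp : ∀ x, gammaP n p a x * Nm n p s x b
      = (if a = x then Nm n p s x b else 0) + (p a * p x / (w * (1 + w))) * Nm n p s x b := by
    intro x
    by_cases hx : a = x
    · simp only [gammaP, Matrix.of_apply, if_pos hx]; ring
    · simp only [gammaP, Matrix.of_apply, if_neg hx]; ring
  rw [Finset.sum_congr rfl fun x _ => hexp x, Finset.sum_add_distrib,
    Finset.sum_ite_eq Finset.univ a (fun x => Nm n p s x b)]
  simp only [Finset.mem_univ, if_pos]
  have hmid : ∑ x, (p a * p x / (w * (1 + w))) * Nm n p s x b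
      = (p a / (w * (1 + w)))
        * ((w * gammaP n p s b * (1 - w ^ 2) + p b * (p s / w)) / (w * (1 + w))) := by
    have hterm : ∀ x, (p a * p x / (w * (1 + w))) * Nm n p s x b
        = (p a / (w * (1 + w))) * ((w * gammaP n p s b / (w * (1 + w))) * p x ^ 2
            + (p b / (w * (1 + w))) * (p x * gammaP n p x s)) := by
      intro x
      simp only [Nm]
      rw [← hwdef]
      field_simp
    rw [Finset.sum_congr rfl fun x _ => hterm x, ← Finset.mul_sum, Finset.sum_add_distrib,
      ← Finset.mul_sum, ← Finset.mul_sum, hpw, hsum2]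
    field_simp
  rw [hmid]
  simp only [Nm, Gd, gammaP, Matrix.of_apply, Pi.single_apply]
  rw [← hwdef]
  by_cases ha : a = s <;> by_cases hb : b = s
  · subst ha; subst hb; simp only [if_pos rfl]; field_simp; ring
  · subst ha
    simp only [if_pos rfl, if_neg hb, if_neg (fun h : a = b => hb h.symm)]
    field_simp; ring
  · subst hb; simp only [if_pos rfl, if_neg ha]; field_simp; ring
  · simp only [if_neg ha, if_neg hb, if_neg (fun h : s = b => hb h.symm)]
    field_simp; ring

lemma gammaP_symm (n : ℕ) (p : Fin n → ℝ) : (gammaP n p)ᵀ = gammaP n p := by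
  refine Matrix.ext fun i j => ?_
  simp only [Matrix.transpose_apply, gammaP, Matrix.of_apply]
  rcases eq_or_ne i j with h | h
  · subst h; ring
  · rw [if_neg h, if_neg (Ne.symm h)]; ring

lemma gd_symm (n : ℕ) (p : Fin n → ℝ) (s : Fin n) (a b : Fin n) :
    Gd n p s a b = Gd n p s b a := by
  unfold Gd; ring

lemma GdM_eq (n : ℕ) (p : Fin n → ℝ) (s : Fin n) (hw : 0 < wP n p)
    (hpw : ∑ x, p x ^ 2 = 1 - wP n p ^ 2) :
    Matrix.of (Gd n p s) = gammaP n p * Matrix.of (Nm n p s) := by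
  refine Matrix.ext fun a b => ?_
  rw [Matrix.mul_apply]
  exact (key_sum n p s hw hpw a b).symm

lemma GdM_eq' (n : ℕ) (p : Fin n → ℝ) (s : Fin n) (hw : 0 < wP n p)
    (hpw : ∑ x, p x ^ 2 = 1 - wP n p ^ 2) :
    Matrix.of (Gd n p s) = (Matrix.of (Nm n p s))ᵀ * gammaP n p := by
  have h1 : (Matrix.of (Gd n p s))ᵀ = Matrix.of (Gd n p s) :=
    Matrix.ext fun i j => gd_symm n p s j i
  conv_lhs => rw [← h1, GdM_eq n p s hw hpw]
  rw [Matrix.transpose_mul, gammaP_symm]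

lemma Aentry (n : ℕ) (r : Fin n → Fin n → ℝ) (q : Fin n → ℝ) (i j : Fin n) :
    AmatP n r q i j
      = (wP n q)⁻¹ * ∑ y, (∑ x, gammaP n q i x * r x y) * gammaP n q y j := by
  simp [AmatP, Matrix.mul_apply, Matrix.smul_apply, smul_eq_mul]

section Calc

variable (n : ℕ) (r : Fin n → Fin n → ℝ) (p : Fin n → ℝ) (s : Fin n)

lemma hasDerivAt_wP (hw : 0 < wP n p) :
    HasDerivAt (fun t : ℝ => wP n (p + t • (Pi.single s 1 : Fin n → ℝ))) (-(p s) / wP n p)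
      0 := by
  set e : Fin n → ℝ := Pi.single s 1 with he
  set w := wP n p with hwd
  have hw0 : w ≠ 0 := ne_of_gt hw
  have hline : ∀ x : Fin n, HasDerivAt (fun t : ℝ => p x + t * e x) (e x) 0 := by
    intro x
    simpa using (hasDerivAt_mul_const (e x)).const_add (p x)
  have hg : HasDerivAt (fun t : ℝ => ∑ x, (p x + t * e x) ^ 2) (2 * p s) 0 := by
    have h1 : HasDerivAt (fun t : ℝ => ∑ x, (p x + t * e x) ^ 2)
        (∑ x, 2 * (p x + 0 * e x) ^ 1 * e x) 0 :=
      HasDerivAt.fun_sum fun x _ => (hline x).pow 2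
    convert h1 using 1
    simp [he, Pi.single_apply, mul_ite, Finset.sum_ite_eq']
  have hin : HasDerivAt (fun t : ℝ => 1 - ∑ x, (p x + t * e x) ^ 2) (-(2 * p s)) 0 := by
    simpa using (hasDerivAt_const (0:ℝ) (1:ℝ)).fun_sub hg
  have hval : 1 - ∑ x, (p x + 0 * e x) ^ 2 ≠ 0 := by
    have h2 : (0:ℝ) < 1 - ∑ x, p x ^ 2 := Real.sqrt_pos.mp hw
    have : (0:ℝ) < 1 - ∑ x, (p x + 0 * e x) ^ 2 := by simpa using h2
    linarith
  have h4 := hin.sqrt hval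
  have h5 : (fun t : ℝ => Real.sqrt (1 - ∑ x, (p x + t * e x) ^ 2))
      = fun t : ℝ => wP n (p + t • e) := by
    funext t
    simp [wP, Pi.add_apply, Pi.smul_apply, smul_eq_mul]
  rw [h5] at h4
  convert h4 using 1
  have h6 : Real.sqrt (1 - ∑ x, (p x + 0 * e x) ^ 2) = w := by
    simp [hwd, wP]
  rw [h6]
  field_simp

lemma hasDerivAt_gamma_entry (hw : 0 < wP n p) (a b : Fin n) :
    HasDerivAt (fun t : ℝ => gammaP n (p + t • (Pi.single s 1 : Fin n → ℝ)) a b)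
      (Gd n p s a b) 0 := by
  set e : Fin n → ℝ := Pi.single s 1 with he
  set w := wP n p with hwd
  have hw0 : w ≠ 0 := ne_of_gt hw
  have h1w : (1 : ℝ) + w ≠ 0 := by positivity
  have hq0 : p + (0 : ℝ) • e = p := by simp
  have hline : ∀ x : Fin n, HasDerivAt (fun t : ℝ => p x + t * e x) (e x) 0 := by
    intro x
    simpa using (hasDerivAt_mul_const (e x)).const_add (p x)
  have hg : HasDerivAt (fun t : ℝ => ∑ x, (p x + t * e x) ^ 2) (2 * p s) 0 := by
    have h1 : HasDerivAt (fun t : ℝ => ∑ x, (p x + t * e x) ^ 2)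
        (∑ x, 2 * (p x + 0 * e x) ^ 1 * e x) 0 :=
      HasDerivAt.fun_sum fun x _ => (hline x).pow 2
    convert h1 using 1
    simp [he, Pi.single_apply, mul_ite, Finset.sum_ite_eq']
  have hW : HasDerivAt (fun t : ℝ => wP n (p + t • e)) (-(p s) / w) 0 :=
    hasDerivAt_wP n p s hw
  have hnum : HasDerivAt (fun t : ℝ => (p + t • e) a * (p + t • e) b)
      (e a * (p b + 0 * e b) + (p a + 0 * e a) * e b) 0 := by
    have h8 := (hline a).fun_mul (hline b)
    have h9 : (fun t : ℝ => (p a + t * e a) * (p b + t * e b))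
        = fun t : ℝ => (p + t • e) a * (p + t • e) b := by
      funext t; simp
    rwa [h9] at h8
  have hWt : HasDerivAt (fun t : ℝ => wP n (p + t • e) * (1 + wP n (p + t • e)))
      (-(p s) / w * (1 + wP n (p + (0:ℝ) • e)) + wP n (p + (0:ℝ) • e) * (0 + -(p s) / w))
      0 := hW.fun_mul ((hasDerivAt_const (0:ℝ) (1:ℝ)).fun_add hW)
  have hW0 : wP n (p + (0:ℝ) • e) = w := by rw [hq0]
  have hdenne : wP n (p + (0:ℝ) • e) * (1 + wP n (p + (0:ℝ) • e)) ≠ 0 := by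
    rw [hW0]; positivity
  have hdiv := hnum.fun_div hWt hdenne
  have hd2 := hdiv.const_add (if a = b then (1:ℝ) else 0)
  show HasDerivAt (fun t : ℝ => (if a = b then (1:ℝ) else 0)
    + ((p + t • e) a * (p + t • e) b)
      / (wP n (p + t • e) * (1 + wP n (p + t • e)))) (Gd n p s a b) 0
  refine hd2.congr_deriv ?_
  simp only [hW0, hq0, Pi.add_apply, Pi.smul_apply, smul_eq_mul, zero_mul, add_zero, zero_add]
  unfold Gd
  rw [← he, ← hwd]
  field_simp
  ring

lemma hasDerivAt_A_entry (hw : 0 < wP n p) (i j : Fin n) :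
    HasDerivAt (fun t : ℝ => AmatP n r (p + t • (Pi.single s 1 : Fin n → ℝ)) i j)
      (p s / wP n p ^ 3 * (∑ y, (∑ x, gammaP n p i x * r x y) * gammaP n p y j)
        + (wP n p)⁻¹ * ∑ y, ((∑ x, Gd n p s i x * r x y) * gammaP n p y j
            + (∑ x, gammaP n p i x * r x y) * Gd n p s y j)) 0 := by
  set e : Fin n → ℝ := Pi.single s 1 with he
  set w := wP n p with hwd
  have hw0 : w ≠ 0 := ne_of_gt hw
  have hq0 : p + (0 : ℝ) • e = p := by simp
  have hW0 : wP n (p + (0:ℝ) • e) = w := by rw [hq0]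
  have hW := hasDerivAt_wP n p s hw
  have hinv : HasDerivAt (fun t : ℝ => (wP n (p + t • e))⁻¹)
      (-(-(p s) / w) / wP n (p + (0:ℝ) • e) ^ 2) 0 := hW.inv (by rw [hW0]; exact hw0)
  have hγ : ∀ a b, HasDerivAt (fun t : ℝ => gammaP n (p + t • e) a b) (Gd n p s a b) 0 :=
    fun a b => hasDerivAt_gamma_entry n p s hw a b
  have hsum : HasDerivAt
      (fun t : ℝ => ∑ y, (∑ x, gammaP n (p + t • e) i x * r x y) * gammaP n (p + t • e) y j)
      (∑ y, ((∑ x, Gd n p s i x * r x y) * gammaP n (p + (0:ℝ) • e) y j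
        + (∑ x, gammaP n (p + (0:ℝ) • e) i x * r x y) * Gd n p s y j)) 0 :=
    HasDerivAt.fun_sum fun y _ =>
      (HasDerivAt.fun_sum fun x _ => (hγ i x).mul_const (r x y)).mul (hγ y j)
  have hcomb := hinv.fun_mul hsum
  have hfun : (fun t : ℝ => (wP n (p + t • e))⁻¹
      * ∑ y, (∑ x, gammaP n (p + t • e) i x * r x y) * gammaP n (p + t • e) y j)
      = fun t : ℝ => AmatP n r (p + t • e) i j := by
    funext t
    rw [Aentry]
  rw [hfun] at hcomb
  refine hcomb.congr_deriv ?_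
  simp only [hq0, hW0]
  rw [← hwd]
  field_simp

lemma diffAt_Phi (hw : 0 < wP n p) :
    DifferentiableAt ℝ (fun q : Fin n → ℝ => (fun i j => AmatP n r q i j)) p := by
  have hw0 : wP n p ≠ 0 := ne_of_gt hw
  have hdenne : wP n p * (1 + wP n p) ≠ 0 := by positivity
  have hsq : DifferentiableAt ℝ (fun q : Fin n → ℝ => 1 - ∑ x, q x ^ 2) p :=
    (differentiableAt_const _).sub
      (DifferentiableAt.fun_sum fun x _ => ((differentiable_apply (𝕜 := ℝ) x) p).pow 2)
  have hne : 1 - ∑ x, p x ^ 2 ≠ 0 := ne_of_gt (Real.sqrt_pos.mp hw)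
  have hsqrt : DifferentiableAt ℝ (fun q : Fin n → ℝ => wP n q) p := by
    unfold wP
    exact hsq.sqrt hne
  have hγ : ∀ a b, DifferentiableAt ℝ (fun q : Fin n → ℝ => gammaP n q a b) p := by
    intro a b
    have hrw : (fun q : Fin n → ℝ => gammaP n q a b)
        = fun q : Fin n → ℝ => (if a = b then (1:ℝ) else 0)
            + q a * q b * (wP n q * (1 + wP n q))⁻¹ := by
      funext q
      simp only [gammaP, Matrix.of_apply, div_eq_mul_inv]
    rw [hrw]
    exact (differentiableAt_const _).add
      ((((differentiable_apply (𝕜 := ℝ) a) p).mul ((differentiable_apply (𝕜 := ℝ) b) p)).mul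
        ((hsqrt.mul ((differentiableAt_const _).add hsqrt)).inv hdenne))
  rw [differentiableAt_pi]
  intro i
  rw [differentiableAt_pi]
  intro j
  have hrw2 : (fun q : Fin n → ℝ => AmatP n r q i j)
      = fun q : Fin n → ℝ =>
          (wP n q)⁻¹ * ∑ y, (∑ x, gammaP n q i x * r x y) * gammaP n q y j := by
    funext q
    rw [Aentry]
  rw [hrw2]
  exact (hsqrt.inv hw0).mul (DifferentiableAt.fun_sum fun y _ =>
    (DifferentiableAt.fun_sum fun x _ => (hγ i x).mul_const (r x y)).mul (hγ y j))

end Calc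

def trL (n : ℕ) : (Fin n → Fin n → ℝ) →L[ℝ] (Fin n → Fin n → ℝ) :=
  LinearMap.toContinuousLinearMap
    { toFun := fun a => fun i j => a j i
      map_add' := fun _ _ => rfl
      map_smul' := fun _ _ => rfl }

set_option maxHeartbeats 2000000 in

/-- Lemma 4.2: with `w = √(1−|p|²)`, `γ^{ik} = δ_{ik} + p_i p_k/(w(1+w))`,
`A(r,p) = (1/w) γ r γ = (a_{ij})` and `G(r,p) = f(λ(A(r,p)))` where
`f(κ) = σ_k(λ(κ))/σ_l(λ(κ))`: at every `(r,p)` with `λ(A(r,p)) ∈ Γ̃_k` (i.e. the eigenvalue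
vector `κ` of `A(r,p)` lies in `Γ̃_k`),
`∂G/∂p_s = (p_s/w²) Σ_i f_i κ_i + (2/(w(1+w))) Σ_{i,j,t} F^{ij} a_{it} (w p_t γ^{sj} + p_j γ^{ts})`,
where `f_i = ∂f/∂κ_i(κ)` and `F^{ij} = ∂(f∘λ)/∂a_{ij}` at `A(r,p)`. -/
theorem stmt_16 (n k l : ℕ) (hl : l < k) (hk : k ≤ n)
    (r : Fin n → Fin n → ℝ) (hr : ∀ i j, r i j = r j i)
    (p : Fin n → ℝ) (hp : ∑ i, (p i) ^ 2 < 1)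
    (κ : Fin n → ℝ) (hκeig : IsEigs n (AmatP n r p) κ) (hκ : κ ∈ GammaT n k)
    (s : Fin n) :
    fderiv ℝ (fun q : Fin n → ℝ => Gop n k l r q) p (Pi.single s 1)
      = p s / (wP n p) ^ 2 * (∑ i, fderiv ℝ (Fquot n k l) κ (Pi.single i 1) * κ i)
        + 2 / (wP n p * (1 + wP n p)) *
            ∑ i, ∑ j, ∑ t,
              fderiv ℝ (fMat n k l) (fun a b => AmatP n r p a b) (dirM n i j)
                * AmatP n r p i t
                * (wP n p * p t * gammaP n p s j + p j * gammaP n p t s) := by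
  have hn : 0 < n := lt_of_lt_of_le (lt_of_le_of_lt (Nat.zero_le l) hl) hk
  set w := wP n p with hwd
  have hw : 0 < w := Real.sqrt_pos.mpr (by linarith)
  have hw0 : w ≠ 0 := ne_of_gt hw
  have h1w : (1 : ℝ) + w ≠ 0 := by positivity
  have hpw : ∑ x, p x ^ 2 = 1 - w ^ 2 := by
    have h := Real.sq_sqrt (show (0:ℝ) ≤ 1 - ∑ i, p i ^ 2 by linarith)
    rw [hwd, wP]
    linarith
  set e : Fin n → ℝ := Pi.single s 1 with he
  set Aent : Fin n → Fin n → ℝ := fun i j => AmatP n r p i j with hAent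
  have hofA : Matrix.of Aent = AmatP n r p := rfl
  -- spectral facts
  have hsig : ∀ m : ℕ, m ≤ n →
      sigmaMat n m ((Matrix.of Aent).trace • (1 : Matrix (Fin n) (Fin n) ℝ) - Matrix.of Aent)
        = esymm n m (lamEta n κ) := by
    intro m hm
    rw [hofA]
    exact sigmaMat_eq n hn (AmatP n r p) κ hκeig m hm
  have hesl_pos : 0 < esymm n l (lamEta n κ) := by
    rcases Nat.eq_zero_or_pos l with h0 | h0
    · subst h0
      simp [esymm, Finset.powersetCard_zero]
    · exact hκ l h0 hl.le
  have hlk : l ≤ n := le_trans hl.le hk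
  have hden_ne : sigmaMat n l
      ((Matrix.of Aent).trace • (1 : Matrix (Fin n) (Fin n) ℝ) - Matrix.of Aent) ≠ 0 := by
    rw [hsig l hlk]
    exact ne_of_gt hesl_pos
  have hLdiff : DifferentiableAt ℝ (fMat n k l) Aent := differentiableAt_fMat n k l Aent hden_ne
  set L := fderiv ℝ (fMat n k l) Aent with hL
  have hval : fMat n k l Aent = Fquot n k l κ := by
    unfold fMat Fquot
    rw [hsig k hk, hsig l hlk]
  -- chain rule
  set Φ : (Fin n → ℝ) → (Fin n → Fin n → ℝ) := fun q => (fun i j => AmatP n r q i j) with hΦdef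
  have hΦ : DifferentiableAt ℝ Φ p := diffAt_Phi n r p hw
  have hΦp : Φ p = Aent := rfl
  have hchain : fderiv ℝ (fun q : Fin n → ℝ => Gop n k l r q) p e = L (fderiv ℝ Φ p e) := by
    have hcomp : (fun q : Fin n → ℝ => Gop n k l r q) = (fMat n k l) ∘ Φ := rfl
    rw [hcomp, fderiv_comp p (by rw [hΦp]; exact hLdiff) hΦ]
    rfl
  -- directional derivative of Φ
  set Ad : Fin n → Fin n → ℝ := fun i j =>
    p s / w ^ 3 * (∑ y, (∑ x, gammaP n p i x * r x y) * gammaP n p y j)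
      + w⁻¹ * ∑ y, ((∑ x, Gd n p s i x * r x y) * gammaP n p y j
          + (∑ x, gammaP n p i x * r x y) * Gd n p s y j) with hAdDef
  have hdirp : fderiv ℝ Φ p e = Ad := by
    have hline : HasDerivAt (fun t : ℝ => p + t • e) e 0 := by
      simpa using ((hasDerivAt_id (0:ℝ)).smul_const e).const_add p
    have h1 : HasDerivAt (fun t : ℝ => Φ (p + t • e)) (fderiv ℝ Φ p e) 0 := by
      have hq0 : p + (0:ℝ) • e = p := by simp
      have hΦ' : HasFDerivAt Φ (fderiv ℝ Φ p) ((fun t : ℝ => p + t • e) 0) := by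
        simp only [hq0]
        exact hΦ.hasFDerivAt
      exact hΦ'.comp_hasDerivAt 0 hline
    have h2 : HasDerivAt (fun t : ℝ => Φ (p + t • e)) Ad 0 :=
      hasDerivAt_pi.mpr fun i => hasDerivAt_pi.mpr fun j =>
        hasDerivAt_A_entry n r p s hw i j
    exact h1.unique h2
  rw [hchain, hdirp, clm_mat n L Ad]
  -- symmetry of A and of F
  have hAsymm : (AmatP n r p)ᵀ = AmatP n r p := by
    unfold AmatP
    rw [Matrix.transpose_smul, Matrix.transpose_mul, Matrix.transpose_mul, gammaP_symm,
      show (Matrix.of r)ᵀ = Matrix.of r from Matrix.ext fun i j => hr j i]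
    rw [Matrix.mul_assoc]
  have hAentT : trL n Aent = Aent := by
    funext i j
    show AmatP n r p j i = AmatP n r p i j
    conv_lhs => rw [← hAsymm, Matrix.transpose_apply]
  have hFsym : ∀ i j, L (dirM n i j) = L (dirM n j i) := by
    have hfM : (fMat n k l) ∘ ⇑(trL n) = fMat n k l := funext fun a => fMat_transpose n k l a
    have h1 : HasFDerivAt (fMat n k l) L Aent := hLdiff.hasFDerivAt
    have h2 : HasFDerivAt ((fMat n k l) ∘ ⇑(trL n)) (L.comp (trL n)) Aent := by
      refine HasFDerivAt.comp Aent ?_ (trL n).hasFDerivAt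
      rw [hAentT]
      exact h1
    rw [hfM] at h2
    have hLL : L = L.comp (trL n) := h1.unique h2
    intro i j
    have htr : (trL n) (dirM n i j) = dirM n j i := by
      funext a b
      show dirM n i j b a = dirM n j i a b
      simp [dirM, and_comm]
    conv_lhs => rw [hLL]
    show L ((trL n) (dirM n i j)) = L (dirM n j i)
    rw [htr]
  have hswap : ∀ M : Matrix (Fin n) (Fin n) ℝ,
      ∑ i, ∑ j, (Mᵀ) i j * L (dirM n i j) = ∑ i, ∑ j, M i j * L (dirM n i j) := by
    intro M
    rw [Finset.sum_comm]
    refine Finset.sum_congr rfl fun i _ => Finset.sum_congr rfl fun j _ => ?_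
    rw [Matrix.transpose_apply, hFsym j i]
  -- matrix identity for Ad
  set N : Matrix (Fin n) (Fin n) ℝ := Matrix.of (Nm n p s) with hN
  have hS : ∀ (M1 M2 : Matrix (Fin n) (Fin n) ℝ) (i j : Fin n),
      ∑ y, (∑ x, M1 i x * r x y) * M2 y j = (M1 * Matrix.of r * M2) i j := by
    intro M1 M2 i j
    simp [Matrix.mul_apply]
  have hmat1 : Matrix.of (Gd n p s) * Matrix.of r * gammaP n p
      = Nᵀ * (gammaP n p * Matrix.of r * gammaP n p) := by
    rw [GdM_eq' n p s hw hpw]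
    simp only [Matrix.mul_assoc]
    rfl
  have hmat2 : gammaP n p * Matrix.of r * Matrix.of (Gd n p s)
      = (gammaP n p * Matrix.of r * gammaP n p) * N := by
    rw [GdM_eq n p s hw hpw]
    simp only [Matrix.mul_assoc]
    rfl
  have hAd : ∀ i j, Ad i j = p s / w ^ 2 * Aent i j
      + ((AmatP n r p * N) i j + (Nᵀ * AmatP n r p) i j) := by
    intro i j
    have e1 : ∑ y, (∑ x, Gd n p s i x * r x y) * gammaP n p y j
        = (Nᵀ * (gammaP n p * Matrix.of r * gammaP n p)) i j := by
      rw [← hmat1, ← hS]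
      rfl
    have e2 : ∑ y, (∑ x, gammaP n p i x * r x y) * Gd n p s y j
        = ((gammaP n p * Matrix.of r * gammaP n p) * N) i j := by
      rw [← hmat2, ← hS]
      rfl
    have e0 : ∑ y, (∑ x, gammaP n p i x * r x y) * gammaP n p y j
        = (gammaP n p * Matrix.of r * gammaP n p) i j := hS _ _ i j
    have hA1 : (AmatP n r p * N) i j
        = w⁻¹ * ((gammaP n p * Matrix.of r * gammaP n p) * N) i j := by
      unfold AmatP
      rw [Matrix.smul_mul, Matrix.smul_apply, smul_eq_mul]
    have hA2 : (Nᵀ * AmatP n r p) i j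
        = w⁻¹ * (Nᵀ * (gammaP n p * Matrix.of r * gammaP n p)) i j := by
      unfold AmatP
      rw [Matrix.mul_smul, Matrix.smul_apply, smul_eq_mul]
    have hA0 : Aent i j = w⁻¹ * (gammaP n p * Matrix.of r * gammaP n p) i j := by
      show AmatP n r p i j = _
      unfold AmatP
      rw [Matrix.smul_apply, smul_eq_mul]
    rw [hAdDef]
    simp only [Finset.sum_add_distrib]
    rw [e1, e2, e0, hA1, hA2, hA0]
    field_simp
    ring
  -- split the sum
  have hsplit : ∑ i, ∑ j, Ad i j * L (dirM n i j)
      = p s / w ^ 2 * (∑ i, ∑ j, Aent i j * L (dirM n i j))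
        + 2 * ∑ i, ∑ j, (AmatP n r p * N) i j * L (dirM n i j) := by
    have hterm : ∀ i j, Ad i j * L (dirM n i j)
        = p s / w ^ 2 * (Aent i j * L (dirM n i j))
          + ((AmatP n r p * N) i j * L (dirM n i j)
            + (Nᵀ * AmatP n r p) i j * L (dirM n i j)) := by
      intro i j
      rw [hAd i j]
      ring
    simp only [hterm, Finset.sum_add_distrib]
    have hNA : Nᵀ * AmatP n r p = (AmatP n r p * N)ᵀ := by
      rw [Matrix.transpose_mul, hAsymm]
    rw [hNA, hswap (AmatP n r p * N)]
    simp only [← Finset.mul_sum]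
    ring
  rw [hsplit]
  -- Euler identities
  have hEA : ∑ i, ∑ j, Aent i j * L (dirM n i j) = ((k - l : ℕ) : ℝ) * fMat n k l Aent := by
    rw [← clm_mat n L Aent]
    exact euler_fderiv (fMat n k l) Aent (k - l) hLdiff
      (fun c hc => fMat_smul n k l hl.le hk Aent c hc)
  have hEκ : ∑ i, fderiv ℝ (Fquot n k l) κ (Pi.single i 1) * κ i
      = ((k - l : ℕ) : ℝ) * Fquot n k l κ := by
    have hd := differentiableAt_Fquot n k l κ (ne_of_gt hesl_pos)
    have h1 := euler_fderiv (Fquot n k l) κ (k - l) hd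
      (fun c hc => Fquot_smul n k l hl.le κ c hc)
    rw [← h1, clm_vec n (fderiv ℝ (Fquot n k l) κ) κ]
    refine Finset.sum_congr rfl fun i _ => ?_
    ring
  have hfirst : ∑ i, ∑ j, Aent i j * L (dirM n i j)
      = ∑ i, fderiv ℝ (Fquot n k l) κ (Pi.single i 1) * κ i := by
    rw [hEA, hval, ← hEκ]
  -- second term
  have hsecond : 2 * ∑ i, ∑ j, (AmatP n r p * N) i j * L (dirM n i j)
      = 2 / (w * (1 + w)) * ∑ i, ∑ j, ∑ t,
          L (dirM n i j) * AmatP n r p i t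
            * (w * p t * gammaP n p s j + p j * gammaP n p t s) := by
    rw [Finset.mul_sum, Finset.mul_sum]
    refine Finset.sum_congr rfl fun i _ => ?_
    rw [Finset.mul_sum, Finset.mul_sum]
    refine Finset.sum_congr rfl fun j _ => ?_
    rw [Matrix.mul_apply, Finset.sum_mul, Finset.mul_sum, Finset.mul_sum]
    refine Finset.sum_congr rfl fun t _ => ?_
    show 2 * (AmatP n r p i t * Nm n p s t j * L (dirM n i j)) = _
    unfold Nm
    rw [← hwd]
    field_simp
  rw [hfirst, hsecond]
end
end
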